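/- arXiv:1310.3864 — 8 statements merged into one kernel-verified Lean document; each statement's English description precedes it below -/
import Mathlib

section
/- Let d ≥ 2 and let u be any word of length n over the alphabet Σ_d = {1,…,d+1}. Call a decomposition of u into consecutive blocks u = B_r ⋯ B_1 (with B_1 the rightmost block) admissible if for every j the leftmost letter of B_j occurs exactly once in B_j. Then the greedy decomposition, which repeatedly removes from the current word its longest suffix whose leftmost letter occurs exactly once in that suffix, is admissible and achieves the minimal possible number of blocks among all admissible decompositions of u. -/
/-- A block is *good* if it is nonempty and its leftmost letter occurs exactly once in it. -/
def GoodBlock {α : Type*} : List α → Prop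
  | [] => False
  | a :: t => a ∉ t

instance {α : Type*} [DecidableEq α] : DecidablePred (GoodBlock (α := α)) := fun l =>
  match l with
  | [] => isFalse (by simp [GoodBlock])
  | a :: t => decidable_of_iff (a ∉ t) (by simp [GoodBlock])

/-- Every word of length 1 is a good block. -/
theorem goodBlock_of_length_one {α : Type*} {l : List α} (h : l.length = 1) : GoodBlock l := by
  match l, h with
  | [a], _ => simp [GoodBlock]

theorem exists_goodBlock_drop {α : Type*} (a : α) (t : List α) :
    ∃ i, GoodBlock ((a :: t).drop i) := by
  refine ⟨(a :: t).length - 1, goodBlock_of_length_one ?_⟩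
  rw [List.length_drop]
  simp

/-- The greedy decomposition: repeatedly remove from the current word its longest suffix
whose leftmost letter occurs exactly once in that suffix.  The blocks are returned in
left-to-right order, i.e. the last entry of the returned list is the first removed suffix. -/
def greedyDecomp {α : Type*} [DecidableEq α] : List α → List (List α)
  | [] => []
  | a :: t =>
    let u := a :: t
    let i := Nat.find (exists_goodBlock_drop a t)
    greedyDecomp (u.take i) ++ [u.drop i]
  termination_by u => u.length
  decreasing_by
    simp only [List.length_take]
    have h1 : Nat.find (exists_goodBlock_drop a t) ≤ (a :: t).length - 1 :=
      Nat.find_le (goodBlock_of_length_one (by rw [List.length_drop]; simp))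
    have h2 : (a :: t).length - 1 < (a :: t).length := by simp
    omega


/-!
Deleting letters from the right end of a good block leaves a good block, as long as something is
left. Hence the greedy cut of a prefix of a word lies no further right than that of the word, so
the number of greedy blocks is monotone under taking prefixes. If `u = w ++ B` with `B` good, the
first block greedy removes from `u` contains `B`, so greedy needs at most one block more on `u`
than on `w`; induction on the number of blocks gives minimality.
-/

variable {α : Type*}

theorem GoodBlock.ne_nil {l : List α} (h : GoodBlock l) : l ≠ [] := by
  rintro rfl
  exact h

theorem GoodBlock.of_prefix {v w : List α} (hw : GoodBlock w) (h : v <+: w) (hv : v ≠ []) :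
    GoodBlock v := by
  match v, w, h with
  | a :: s, b :: t, h =>
    obtain ⟨rfl, hst⟩ := List.cons_prefix_cons.mp h
    exact fun ha => hw (hst.subset ha)

section Greedy

variable [DecidableEq α]

abbrev greedyCut (a : α) (t : List α) : ℕ :=
  Nat.find (exists_goodBlock_drop a t)

theorem greedyDecomp_cons (a : α) (t : List α) :
    greedyDecomp (a :: t) =
      greedyDecomp ((a :: t).take (greedyCut a t)) ++ [(a :: t).drop (greedyCut a t)] :=
  greedyDecomp.eq_2 a t

theorem greedyDecomp_induction {motive : List α → Prop} (nil : motive [])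
    (cons : ∀ a t, motive ((a :: t).take (greedyCut a t)) → motive (a :: t)) (u : List α) :
    motive u :=
  greedyDecomp.induct motive nil cons u

theorem greedyCut_le_length (a : α) (t : List α) : greedyCut a t ≤ t.length :=
  Nat.find_le (goodBlock_of_length_one (by simp))

theorem greedyCut_le_of_prefix (a : α) {s t : List α} (h : s <+: t) :
    greedyCut a s ≤ greedyCut a t := by
  by_cases hi : greedyCut a t ≤ s.length
  · refine Nat.find_le ((Nat.find_spec (exists_goodBlock_drop a t)).of_prefix
      ((List.cons_prefix_cons.mpr ⟨rfl, h⟩).drop _) ?_)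
    simp only [ne_eq, List.drop_eq_nil_iff, List.length_cons]
    omega
  · exact (greedyCut_le_length a s).trans (by omega)

theorem flatten_greedyDecomp (u : List α) : (greedyDecomp u).flatten = u := by
  induction u using greedyDecomp_induction with
  | nil => simp [greedyDecomp]
  | cons a t ih =>
    rw [greedyDecomp_cons, List.flatten_append, ih, List.flatten_singleton]
    exact List.take_append_drop _ _

theorem goodBlock_of_mem_greedyDecomp {u B : List α} (hB : B ∈ greedyDecomp u) :
    GoodBlock B := by
  induction u using greedyDecomp_induction with
  | nil => simp [greedyDecomp] at hB
  | cons a t ih =>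
    rw [greedyDecomp_cons, List.mem_append, List.mem_singleton] at hB
    rcases hB with hB | rfl
    · exact ih hB
    · exact Nat.find_spec (exists_goodBlock_drop a t)

theorem length_greedyDecomp_le_of_prefix {v w : List α} (h : v <+: w) :
    (greedyDecomp v).length ≤ (greedyDecomp w).length := by
  induction w using greedyDecomp_induction generalizing v with
  | nil => rw [List.prefix_nil.mp h]
  | cons a t ih =>
    match v, h with
    | [], _ => simp [greedyDecomp]
    | b :: s, h =>
      obtain ⟨rfl, hst⟩ := List.cons_prefix_cons.mp h
      rw [greedyDecomp_cons, greedyDecomp_cons, List.length_append, List.length_append]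
      have hcut := greedyCut_le_of_prefix b hst
      exact Nat.add_le_add_right (ih ((h.take _).trans (List.take_prefix_take_left hcut))) 1

theorem length_greedyDecomp_append_le (w : List α) {B : List α} (hB : GoodBlock B) :
    (greedyDecomp (w ++ B)).length ≤ (greedyDecomp w).length + 1 := by
  obtain ⟨a, t, hat⟩ := List.exists_cons_of_ne_nil (List.append_ne_nil_of_right_ne_nil w hB.ne_nil)
  have hcut : greedyCut a t ≤ w.length := Nat.find_le (by rw [← hat, List.drop_left]; exact hB)
  have hprefix : (a :: t).take (greedyCut a t) <+: w := by
    simpa [← hat] using List.take_prefix_take_left (l := w ++ B) hcut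
  rw [hat, greedyDecomp_cons, List.length_append, List.length_singleton]
  exact Nat.add_le_add_right (length_greedyDecomp_le_of_prefix hprefix) 1

theorem length_greedyDecomp_le {L : List (List α)} (hL : ∀ B ∈ L, GoodBlock B) :
    (greedyDecomp L.flatten).length ≤ L.length := by
  induction L using List.reverseRecOn with
  | nil => simp [greedyDecomp]
  | append_singleton L B ih =>
    simp only [List.mem_append, List.mem_singleton] at hL
    rw [List.flatten_append, List.flatten_singleton, List.length_append, List.length_singleton]
    calc (greedyDecomp (L.flatten ++ B)).length
        ≤ (greedyDecomp L.flatten).length + 1 :=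
          length_greedyDecomp_append_le _ (hL B (Or.inr rfl))
      _ ≤ L.length + 1 := Nat.add_le_add_right (ih fun C hC => hL C (Or.inl hC)) 1

end Greedy

theorem greedyDecomp_admissible_and_minimal_general (d : ℕ)
    (u : List (Fin (d + 1))) :
    (greedyDecomp u).flatten = u ∧
    (∀ B ∈ greedyDecomp u, GoodBlock B) ∧
    (∀ L : List (List (Fin (d + 1))), L.flatten = u → (∀ B ∈ L, GoodBlock B) →
      (greedyDecomp u).length ≤ L.length) := by
  refine ⟨flatten_greedyDecomp u, fun _ => goodBlock_of_mem_greedyDecomp, ?_⟩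
  rintro L rfl hL
  exact length_greedyDecomp_le hL

/-- for `d ≥ 2` and any word `u` over `Σ_d = {1,…,d+1}`, the greedy decomposition
is admissible (its blocks concatenate to `u` and each block is nonempty with its leftmost letter
occurring exactly once in it), and it has the minimal number of blocks among all admissible
decompositions of `u`. -/
theorem greedyDecomp_admissible_and_minimal (d : ℕ) (hd : 2 ≤ d)
    (u : List (Fin (d + 1))) :
    (greedyDecomp u).flatten = u ∧
    (∀ B ∈ greedyDecomp u, GoodBlock B) ∧
    (∀ L : List (List (Fin (d + 1))), L.flatten = u → (∀ B ∈ L, GoodBlock B) →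
      (greedyDecomp u).length ≤ L.length) :=
  greedyDecomp_admissible_and_minimal_general d u
end

section
/- Let d ≥ 2 and k ≥ 1, and let u be a uniformly random word of length k over Σ_d = {1,…,d+1} (all (d+1)^k words equally likely). Define Y^{AN}(u) as the length of the shortest suffix of u containing every symbol of Σ_d, with Y^{AN}(u) := k if no suffix of u contains all d+1 symbols. Then Y^{AN}(u) has the same distribution as min(Y_d, k), where Y_d is the coupon-collector variable: for every j, P(Y^{AN}(u) = j) = P(min(Y_d, k) = j). -/
/-!
For `j < k`, `YAN ≤ j` says that the last `j` letters of the word contain the whole alphabet.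
Conditioning on the last letter, the probability `coverProb n r j` that `j` uniform letters
cover `r` fixed letters of an `n`-letter alphabet satisfies a first-step recursion, which unrolls
into a convolution with the geometric law of parameter `r / n`. The same convolution describes
the distribution function of `X_1 + ⋯ + X_r` by independence, so `P(YAN ≤ j) = P(Y_d ≤ j)` for
`j < k`; both truncated variables are at most `k`, so their laws on `ℕ` coincide.
-/

open MeasureTheory ProbabilityTheory
open scoped ENNReal

/-- `YAN d k w` is the length of the shortest suffix of the word `w : Fin k → Fin (d+1)`
(the suffix of length `j` consisting of the positions `i` with `k − j ≤ i`) that contains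
every symbol of `Σ_d = {1,…,d+1}`; it equals `k` if no suffix contains all `d+1` symbols. -/
noncomputable def YAN (d k : ℕ) (w : Fin k → Fin (d + 1)) : ℕ :=
  letI := Classical.dec
  if h : ∃ j : ℕ, ∀ a : Fin (d + 1), ∃ i : Fin k, k - j ≤ (i : ℕ) ∧ w i = a
  then Nat.find h else k

open Finset

/-- The probability that a uniform word of length `m` over `n` letters contains each of `r` fixed
letters: the last letter is one of the `r` letters with probability `r / n`. -/
noncomputable def coverProb (n : ℕ) : ℕ → ℕ → ℝ
  | 0, _ => 1
  | _ + 1, 0 => 0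
  | r + 1, m + 1 =>
      (r + 1) / n * coverProb n r m + (1 - (r + 1) / n) * coverProb n (r + 1) m

namespace coverProb

variable {n : ℕ}

@[simp] lemma zero_left (n m : ℕ) : coverProb n 0 m = 1 := by cases m <;> rfl

@[simp] lemma succ_zero (n r : ℕ) : coverProb n (r + 1) 0 = 0 := rfl

lemma succ_succ (n r m : ℕ) : coverProb n (r + 1) (m + 1) =
    (r + 1) / n * coverProb n r m + (1 - (r + 1) / n) * coverProb n (r + 1) m := rfl

lemma zero_right (n r : ℕ) : coverProb n r 0 = if r = 0 then 1 else 0 := by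
  cases r <;> simp

lemma nonneg : ∀ {r : ℕ} (m : ℕ), r ≤ n → 0 ≤ coverProb n r m
  | 0, _, _ => by simp
  | _ + 1, 0, _ => le_rfl
  | r + 1, m + 1, hr => by
    have hp : ((r : ℝ) + 1) / n ≤ 1 := div_le_one_of_le₀ (by exact_mod_cast hr) n.cast_nonneg
    have hq : (0 : ℝ) ≤ 1 - (r + 1) / n := by linarith
    have h₁ := nonneg m (r.le_succ.trans hr)
    have h₂ := nonneg (r := r + 1) m hr
    rw [succ_succ]
    positivity

lemma mul_succ_right (hn : n ≠ 0) (r m : ℕ) :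
    n * coverProb n r (m + 1) = r * coverProb n (r - 1) m + (n - r) * coverProb n r m := by
  cases r with
  | zero => simp
  | succ r =>
    rw [succ_succ, Nat.add_sub_cancel]
    field_simp
    push_cast
    ring

lemma succ_eq_sum (n r : ℕ) : ∀ m, coverProb n (r + 1) m =
    ∑ t ∈ range m, (1 - (r + 1) / n : ℝ) ^ t * ((r + 1) / n) * coverProb n r (m - (t + 1))
  | 0 => by simp
  | m + 1 => by
    rw [succ_succ, succ_eq_sum n r m, sum_range_succ', mul_sum, add_comm]
    simp only [pow_succ, Nat.add_sub_add_right, pow_zero, one_mul, Nat.add_sub_cancel]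
    congr 1
    exact sum_congr rfl fun t _ => by ring

end coverProb

def SuffixCovers {n k : ℕ} (w : Fin k → Fin n) (j : ℕ) (s : Finset (Fin n)) : Prop :=
  ∀ a ∈ s, ∃ i : Fin k, k - j ≤ i ∧ w i = a

instance {n k : ℕ} (w : Fin k → Fin n) (j : ℕ) (s : Finset (Fin n)) :
    Decidable (SuffixCovers w j s) := by
  unfold SuffixCovers; infer_instance

section SuffixCovers

variable {n k : ℕ}

lemma SuffixCovers.mono {w : Fin k → Fin n} {s : Finset (Fin n)} {j j' : ℕ} (hj : j ≤ j')
    (h : SuffixCovers w j s) : SuffixCovers w j' s := fun a ha => by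
  obtain ⟨i, hi, rfl⟩ := h a ha
  exact ⟨i, by omega, rfl⟩

lemma suffixCovers_univ_iff (w : Fin k → Fin n) (j : ℕ) :
    SuffixCovers w j univ ↔ ∀ a, ∃ i : Fin k, k - j ≤ (i : ℕ) ∧ w i = a := by
  simp [SuffixCovers]

lemma suffixCovers_zero_iff (w : Fin k → Fin n) (s : Finset (Fin n)) :
    SuffixCovers w 0 s ↔ s = ∅ := by
  refine ⟨fun h => eq_empty_of_forall_notMem fun a ha => ?_, fun h => by simp [SuffixCovers, h]⟩
  obtain ⟨i, hi, -⟩ := h a ha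
  exact absurd i.isLt (by omega)

lemma suffixCovers_snoc_iff (u : Fin k → Fin n) (a : Fin n) (j : ℕ) (s : Finset (Fin n)) :
    SuffixCovers (Fin.snoc u a : Fin (k + 1) → Fin n) (j + 1) s ↔ SuffixCovers u j (s.erase a) := by
  simp only [SuffixCovers, mem_erase, Fin.exists_fin_succ', Fin.snoc_last, Fin.snoc_castSucc,
    Fin.val_castSucc, Fin.val_last]
  refine forall_congr' fun b => ?_
  by_cases hb : b = a
  · subst hb; simp
  · simp [hb, Ne.symm hb]

lemma card_suffixCovers_succ (j : ℕ) (s : Finset (Fin n)) :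
    #{w : Fin (k + 1) → Fin n | SuffixCovers w (j + 1) s} =
      ∑ a, #{u : Fin k → Fin n | SuffixCovers u j (s.erase a)} := by
  simp only [card_filter]
  rw [← Fintype.sum_prod_type']
  exact (Fintype.sum_equiv (Fin.snocEquiv fun _ => Fin n) _ _ fun x => by
    simp [Fin.snocEquiv, suffixCovers_snoc_iff]).symm

lemma card_suffixCovers (hn : n ≠ 0) (s : Finset (Fin n)) {j : ℕ} (hj : j ≤ k) :
    (#{w : Fin k → Fin n | SuffixCovers w j s} : ℝ) = n ^ k * coverProb n #s j := by
  induction j generalizing k s with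
  | zero =>
    simp only [suffixCovers_zero_iff, coverProb.zero_right, card_eq_zero]
    split_ifs <;> simp [*]
  | succ j ih =>
    obtain ⟨k, rfl⟩ : ∃ k', k = k' + 1 := ⟨k - 1, by omega⟩
    rw [card_suffixCovers_succ, Nat.cast_sum]
    simp_rw [ih _ (by omega : j ≤ k)]
    rw [← mul_sum]
    have hsum : ∑ a, coverProb n #(s.erase a) j =
        #s * coverProb n (#s - 1) j + (n - #s) * coverProb n #s j := by
      rw [← sum_add_sum_compl s]
      congr 1
      · rw [sum_congr rfl fun a ha => by rw [card_erase_of_mem ha]]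
        simp
      · have hs : #s ≤ n := by simpa using card_le_univ s
        rw [sum_congr rfl fun a ha => by rw [erase_eq_of_notMem (by simpa using ha)]]
        simp [card_compl, Nat.cast_sub hs]
    rw [hsum, pow_succ, mul_assoc, coverProb.mul_succ_right hn]

lemma uniformOfFintype_suffixCovers [NeZero n] (s : Finset (Fin n)) {j : ℕ} (hj : j ≤ k) :
    (PMF.uniformOfFintype (Fin k → Fin n)).toMeasure {w | SuffixCovers w j s} =
      ENNReal.ofReal (coverProb n #s j) := by
  rw [PMF.toMeasure_uniformOfFintype_apply _ .of_discrete]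
  simp only [Set.coe_ofPred, Fintype.card_subtype, Fintype.card_fun, Fintype.card_fin]
  have hnk : ((n ^ k : ℕ) : ℝ≥0∞) ≠ 0 := by simp [NeZero.ne n]
  rw [← ENNReal.ofReal_natCast, card_suffixCovers (NeZero.ne n) s hj,
    ENNReal.ofReal_mul' (coverProb.nonneg j (card_le_univ s |>.trans_eq (Fintype.card_fin n))),
    ← Nat.cast_pow, ENNReal.ofReal_natCast, mul_comm, ENNReal.mul_div_cancel_right hnk (by simp)]

end SuffixCovers

section YAN

variable {d k : ℕ}

lemma YAN_le (w : Fin k → Fin (d + 1)) : YAN d k w ≤ k := by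
  unfold YAN
  split_ifs with h
  · simp only [Nat.find_le_iff]
    exact ⟨k, le_rfl, fun a => (h.choose_spec a).imp fun i hi => ⟨by omega, hi.2⟩⟩
  · exact le_rfl

lemma YAN_le_iff (w : Fin k → Fin (d + 1)) {j : ℕ} (hj : j < k) :
    YAN d k w ≤ j ↔ SuffixCovers w j univ := by
  unfold YAN
  split_ifs with h
  · simp only [Nat.find_le_iff, ← suffixCovers_univ_iff]
    exact ⟨fun ⟨m, hm, hc⟩ => hc.mono hm, fun hc => ⟨j, le_rfl, hc⟩⟩
  · exact ⟨fun hle => absurd hle (by omega),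
      fun hc => absurd ⟨j, (suffixCovers_univ_iff w j).1 hc⟩ h⟩

lemma uniformOfFintype_YAN_le {j : ℕ} (hj : j < k) :
    (PMF.uniformOfFintype (Fin k → Fin (d + 1))).toMeasure {w | YAN d k w ≤ j} =
      ENNReal.ofReal (coverProb (d + 1) (d + 1) j) := by
  simp_rw [YAN_le_iff _ hj]
  rw [uniformOfFintype_suffixCovers _ hj.le, card_univ, Fintype.card_fin]

end YAN

section Probability

variable {Ω : Type*} [MeasurableSpace Ω] {μ : Measure Ω}

lemma ProbabilityTheory.IndepFun.measure_add_le_eq_sum {X Y : Ω → ℕ} (hXY : IndepFun X Y μ)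
    (hX : Measurable X) (hY : Measurable Y) (m : ℕ) :
    μ {ω | X ω + Y ω ≤ m} = ∑ t ∈ range (m + 1), μ {ω | X ω = t} * μ {ω | Y ω ≤ m - t} := by
  have hset : {ω | X ω + Y ω ≤ m} = ⋃ t ∈ range (m + 1), X ⁻¹' {t} ∩ Y ⁻¹' Set.Iic (m - t) := by
    ext ω
    simp only [Set.mem_ofPred_eq, Set.mem_iUnion, Set.mem_inter_iff, Set.mem_preimage,
      Set.mem_singleton_iff, Set.mem_Iic, mem_range, exists_prop]
    exact ⟨fun h => ⟨X ω, by omega, rfl, by omega⟩, fun ⟨t, _, hXt, hY⟩ => by omega⟩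
  rw [hset, measure_biUnion_finset]
  · exact sum_congr rfl fun t _ =>
      hXY.measure_inter_preimage_eq_mul _ _ (measurableSet_singleton t) measurableSet_Iic
  · intro a _ b _ hab
    exact Disjoint.mono Set.inter_subset_left Set.inter_subset_left
      (Set.disjoint_singleton.2 hab |>.preimage X)
  · exact fun t _ => (hX (measurableSet_singleton t)).inter (hY measurableSet_Iic)

lemma measure_eq_zero_of_geometric [IsProbabilityMeasure μ] {X : Ω → ℕ} (hX : Measurable X)
    {p : ℝ} (hp₀ : 0 < p) (hp₁ : p ≤ 1)
    (h : ∀ m, 1 ≤ m → μ {ω | X ω = m} = ENNReal.ofReal ((1 - p) ^ (m - 1) * p)) :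
    μ {ω | X ω = 0} = 0 := by
  have hgeom : HasSum (fun m : ℕ => (1 - p) ^ m * p) 1 := by
    have := (hasSum_geometric_of_lt_one (sub_nonneg.2 hp₁) (sub_lt_self 1 hp₀)).mul_right p
    rwa [sub_sub_cancel, inv_mul_cancel₀ hp₀.ne'] at this
  have htail : ∑' m : ℕ, μ {ω | X ω = m + 1} = 1 := by
    simp_rw [h _ (Nat.le_add_left 1 _), Nat.add_sub_cancel]
    rw [← ENNReal.ofReal_tsum_of_nonneg (fun m => by positivity) hgeom.summable, hgeom.tsum_eq,
      ENNReal.ofReal_one]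
  have htotal : ∑' m : ℕ, μ (X ⁻¹' {m}) = 1 := by
    rw [← measure_iUnion (fun a b hab => Set.disjoint_singleton.2 hab |>.preimage X)
      fun m => hX (measurableSet_singleton m)]
    simp [← Set.preimage_iUnion, Set.iUnion_of_singleton]
  rw [tsum_eq_zero_add' ENNReal.summable] at htotal
  change μ {ω | X ω = 0} + ∑' m : ℕ, μ {ω | X ω = m + 1} = 1 at htotal
  simpa [htail] using htotal

lemma measure_preimage_eq_uniformOfFintype [IsProbabilityMeasure μ] {α : Type*} [Fintype α]
    [Nonempty α] [MeasurableSpace α] [DiscreteMeasurableSpace α] {W : Ω → α}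
    (hW : ∀ a, μ {ω | W ω = a} = (Fintype.card α : ℝ≥0∞)⁻¹) (s : Set α) :
    μ (W ⁻¹' s) = (PMF.uniformOfFintype α).toMeasure s := by
  set U := (PMF.uniformOfFintype α).toMeasure
  -- `W` need not be measurable: subadditivity gives `≤` on every set, and `≤` on `sᶜ` gives `≥`.
  have hle : ∀ t : Set α, μ (W ⁻¹' t) ≤ U t := fun t => by
    classical
    calc μ (W ⁻¹' t) = μ (⋃ a ∈ t.toFinset, {ω | W ω = a}) := by congr 1; ext; simp
      _ ≤ ∑ a ∈ t.toFinset, μ {ω | W ω = a} := measure_biUnion_finset_le _ _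
      _ = ∑ a ∈ t.toFinset, U {a} := by
        simp [U, hW, PMF.uniformOfFintype_apply]
      _ = U t := by rw [sum_measure_singleton, Set.coe_toFinset]
  refine le_antisymm (hle s) ?_
  have hcover : 1 ≤ μ (W ⁻¹' s) + U sᶜ := calc
    1 = μ (W ⁻¹' s ∪ W ⁻¹' sᶜ) := by simp
    _ ≤ μ (W ⁻¹' s) + μ (W ⁻¹' sᶜ) := measure_union_le _ _
    _ ≤ μ (W ⁻¹' s) + U sᶜ := by gcongr; exact hle _
  calc U s = 1 - U sᶜ := by rw [← prob_compl_eq_one_sub .of_discrete, compl_compl]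
    _ ≤ μ (W ⁻¹' s) := tsub_le_iff_right.2 hcover

variable [IsProbabilityMeasure μ] {n : ℕ} {X : Fin n → Ω → ℕ}

lemma measure_sum_le_eq_coverProb (hXmeas : ∀ i, Measurable (X i))
    (hXdist : ∀ (i : Fin n) (m : ℕ), 1 ≤ m → μ {ω | X i ω = m} = ENNReal.ofReal
      ((1 - ((i : ℝ) + 1) / n) ^ (m - 1) * (((i : ℝ) + 1) / n)))
    (hXindep : iIndepFun X μ) {r : ℕ} (hr : r ≤ n) (m : ℕ) :
    μ {ω | ∑ i ∈ ({i | (i : ℕ) < r} : Finset (Fin n)), X i ω ≤ m} =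
      ENNReal.ofReal (coverProb n r m) := by
  induction r generalizing m with
  | zero => simp
  | succ r ih =>
    set i₀ : Fin n := ⟨r, hr⟩
    set S : Finset (Fin n) := {i | (i : ℕ) < r}
    have hi₀ : i₀ ∉ S := by simp [S, i₀]
    have hS : ({i | (i : ℕ) < r + 1} : Finset (Fin n)) = insert i₀ S := by
      ext i; simp [S, i₀, Fin.ext_iff]; omega
    have hn : 0 < n := by omega
    have hp : (0 : ℝ) < (r + 1) / n ∧ ((r : ℝ) + 1) / n ≤ 1 :=
      ⟨by positivity, div_le_one_of_le₀ (by exact_mod_cast hr) n.cast_nonneg⟩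
    have hq : (0 : ℝ) ≤ 1 - (r + 1) / n := sub_nonneg.2 hp.2
    simp_rw [hS, sum_insert hi₀]
    have hind : IndepFun (X i₀) (fun ω => ∑ i ∈ S, X i ω) μ := by
      simpa only [Finset.sum_fn] using (hXindep.indepFun_finsetSum_of_notMem hXmeas hi₀).symm
    rw [hind.measure_add_le_eq_sum (hXmeas i₀) (by fun_prop) m, sum_range_succ',
      measure_eq_zero_of_geometric (hXmeas i₀) hp.1 hp.2 (hXdist i₀), zero_mul, add_zero,
      coverProb.succ_eq_sum, ENNReal.ofReal_sum_of_nonneg]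
    · refine sum_congr rfl fun t _ => ?_
      rw [hXdist i₀ (t + 1) (by omega), ih (by omega), ← ENNReal.ofReal_mul (by positivity)]
      simp [i₀]
    · exact fun t _ => mul_nonneg (by positivity) (coverProb.nonneg _ (by omega))

end Probability

lemma map_YAN_uniformOfFintype_eq_map_min_sum {Ω : Type*} [MeasurableSpace Ω] {μ : Measure Ω}
    [IsProbabilityMeasure μ] {d k : ℕ} {X : Fin (d + 1) → Ω → ℕ} (hXmeas : ∀ i, Measurable (X i))
    (hXdist : ∀ (i : Fin (d + 1)) (m : ℕ), 1 ≤ m → μ {ω | X i ω = m} = ENNReal.ofReal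
      ((1 - ((i : ℝ) + 1) / (d + 1 : ℕ)) ^ (m - 1) * (((i : ℝ) + 1) / (d + 1 : ℕ))))
    (hXindep : iIndepFun X μ) :
    (PMF.uniformOfFintype (Fin k → Fin (d + 1))).toMeasure.map (YAN d k) =
      μ.map fun ω => min (∑ i, X i ω) k := by
  have hT : Measurable fun ω => ∑ i, X i ω := by fun_prop
  refine Measure.ext_of_Iic _ _ fun j => ?_
  rw [Measure.map_apply .of_discrete measurableSet_Iic,
    Measure.map_apply (hT.min measurable_const) measurableSet_Iic]
  rcases lt_or_ge j k with hj | hj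
  · have hsum := measure_sum_le_eq_coverProb hXmeas hXdist hXindep le_rfl j
    simp only [Fin.is_lt, filter_true] at hsum
    have hmin : (fun ω => min (∑ i, X i ω) k) ⁻¹' Set.Iic j = {ω | ∑ i, X i ω ≤ j} := by
      ext ω
      simp [not_le.2 hj]
    rw [hmin, hsum]
    exact uniformOfFintype_YAN_le hj
  · have hYAN : YAN d k ⁻¹' Set.Iic j = Set.univ := by ext w; simpa using (YAN_le w).trans hj
    have hmin : (fun ω => min (∑ i, X i ω) k) ⁻¹' Set.Iic j = Set.univ := by ext; simp [hj]
    simp [hYAN, hmin]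

theorem YAN_distribution_eq_truncated_couponCollector_general
    (d k : ℕ)
    {Ω : Type*} [MeasurableSpace Ω] (P : Measure Ω) [IsProbabilityMeasure P]
    (W : Ω → Fin k → Fin (d + 1))
    (hW : ∀ w : Fin k → Fin (d + 1), P {ω | W ω = w} = 1 / ((d : ℝ≥0∞) + 1) ^ k)
    {Ω' : Type*} [MeasurableSpace Ω'] (P' : Measure Ω') [IsProbabilityMeasure P']
    (X : Fin (d + 1) → Ω' → ℕ) (hXmeas : ∀ i, Measurable (X i))
    (hXdist : ∀ (i : Fin (d + 1)) (m : ℕ), 1 ≤ m →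
      P' {ω | X i ω = m} = ENNReal.ofReal
        ((1 - ((i : ℝ) + 1) / ((d : ℝ) + 1)) ^ (m - 1) * (((i : ℝ) + 1) / ((d : ℝ) + 1))))
    (hXindep : iIndepFun X P') :
    ∀ j : ℕ, P {ω | YAN d k (W ω) = j} = P' {ω | min (∑ i, X i ω) k = j} := by
  intro j
  have hlaw := map_YAN_uniformOfFintype_eq_map_min_sum (k := k) hXmeas (by simpa using hXdist) hXindep
  calc P {ω | YAN d k (W ω) = j}
      = (PMF.uniformOfFintype (Fin k → Fin (d + 1))).toMeasure (YAN d k ⁻¹' {j}) :=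
        measure_preimage_eq_uniformOfFintype (α := Fin k → Fin (d + 1)) (by simpa using hW)
          (YAN d k ⁻¹' {j})
    _ = P' {ω | min (∑ i, X i ω) k = j} := by
        rw [← Measure.map_apply .of_discrete (measurableSet_singleton j), hlaw,
          Measure.map_apply (by fun_prop) (measurableSet_singleton j)]
        rfl

/-- Let `d ≥ 2`, `k ≥ 1`, and let `W` be a uniformly random word of length `k`
over `Σ_d = {1,…,d+1}`.  Then `Y^{AN}(W)` has the same distribution as `min (Y_d, k)`, where
`Y_d = X_1 + ⋯ + X_{d+1}` is a sum of independent geometric random variables,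
`X_i` having success probability `i/(d+1)`. -/
theorem YAN_distribution_eq_truncated_couponCollector
    (d k : ℕ) (hd : 2 ≤ d) (hk : 1 ≤ k)
    {Ω : Type*} [MeasurableSpace Ω] (P : Measure Ω) [IsProbabilityMeasure P]
    (W : Ω → Fin k → Fin (d + 1))
    (hW : ∀ w : Fin k → Fin (d + 1), P {ω | W ω = w} = 1 / ((d : ℝ≥0∞) + 1) ^ k)
    {Ω' : Type*} [MeasurableSpace Ω'] (P' : Measure Ω') [IsProbabilityMeasure P']
    (X : Fin (d + 1) → Ω' → ℕ) (hXmeas : ∀ i, Measurable (X i))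
    (hXdist : ∀ (i : Fin (d + 1)) (m : ℕ), 1 ≤ m →
      P' {ω | X i ω = m} = ENNReal.ofReal
        ((1 - ((i : ℝ) + 1) / ((d : ℝ) + 1)) ^ (m - 1) * (((i : ℝ) + 1) / ((d : ℝ) + 1))))
    (hXindep : iIndepFun X P') :
    ∀ j : ℕ, P {ω | YAN d k (W ω) = j} = P' {ω | min (∑ i, X i ω) k = j} :=
  YAN_distribution_eq_truncated_couponCollector_general d k P W hW P' X hXmeas hXdist hXindep
end

section
/- Let d ≥ 2 and θ ∈ ℝ. Then lim_{m→∞} (1/log m) · Σ_{i=1}^m log(1 + ((d+1)/(d·i+1))·(e^{θ} − 1)) = ((d+1)/d)·(e^{θ} − 1). (This says the normalized cumulant generating function of G_m = Σ_{i=1}^m B_i, with B_i independent Bernoulli((d+1)/(d·i+1)), converges to the cumulant generating function of a Poisson((d+1)/d) variable.) -/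
open Filter Real

open Topology Asymptotics

/-! If `i · aᵢ → L`, then `aᵢ = L/i + o(1/i)`, so `Σ_{i ≤ m} aᵢ = L·Hₘ + o(Hₘ)` with `Hₘ ~ log m` the
harmonic numbers. Since `log (1 + x) ~ x` as `x → 0`, the summand `aᵢ = log (1 + cᵢ (e^θ - 1))` with
`cᵢ = (d+1)/(d i + 1)` satisfies `i · aᵢ → ((d+1)/d) (e^θ - 1)`. -/

lemma harmonic_eq_sum_range_inv_succ (n : ℕ) :
    (harmonic n : ℝ) = ∑ i ∈ Finset.range n, ((i : ℝ) + 1)⁻¹ := by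
  simp [harmonic]

lemma tendsto_harmonic_div_log :
    Tendsto (fun n : ℕ => (harmonic n : ℝ) / log n) atTop (𝓝 1) := by
  have hlog : Tendsto (fun n : ℕ => log n) atTop atTop :=
    tendsto_log_atTop.comp tendsto_natCast_atTop_atTop
  have h := (tendsto_harmonic_sub_log.div_atTop hlog).add_const 1
  rw [zero_add] at h
  refine h.congr' ?_
  filter_upwards [hlog.eventually_ne_atTop 0] with n hn
  field_simp
  ring

lemma sum_range_isLittleO_harmonic {e : ℕ → ℝ}
    (he : Tendsto (fun i : ℕ => ((i : ℝ) + 1) * e i) atTop (𝓝 0)) :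
    (fun n => ∑ i ∈ Finset.range n, e i) =o[atTop] (fun n => (harmonic n : ℝ)) := by
  have he' : e =o[atTop] (fun i : ℕ => ((i : ℝ) + 1)⁻¹) := by
    refine (isLittleO_iff_tendsto' (Eventually.of_forall fun i h => ?_)).2 ?_
    · exact absurd h (inv_ne_zero (by positivity))
    · simpa [div_inv_eq_mul, mul_comm] using he
  simp_rw [harmonic_eq_sum_range_inv_succ]
  refine he'.sum_range (fun i => by positivity) ?_
  simpa [one_div] using tendsto_sum_range_one_div_nat_succ_atTop

lemma sum_Icc_one_eq_sum_range_succ {M : Type*} [AddCommMonoid M] (f : ℕ → M) (n : ℕ) :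
    ∑ i ∈ Finset.Icc 1 n, f i = ∑ i ∈ Finset.range n, f (i + 1) := by
  rw [Finset.range_eq_Ico, Finset.sum_Ico_add' f 0 n 1]
  simp only [zero_add, Finset.Ico_add_one_right_eq_Icc]

theorem tendsto_sum_Icc_div_log_of_tendsto_mul {a : ℕ → ℝ} {L : ℝ}
    (ha : Tendsto (fun i : ℕ => (i : ℝ) * a i) atTop (𝓝 L)) :
    Tendsto (fun m : ℕ => (∑ i ∈ Finset.Icc 1 m, a i) / log m) atTop (𝓝 L) := by
  set e : ℕ → ℝ := fun i => a (i + 1) - L * ((i : ℝ) + 1)⁻¹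
  have he : Tendsto (fun i : ℕ => ((i : ℝ) + 1) * e i) atTop (𝓝 0) := by
    have h := ((tendsto_add_atTop_iff_nat 1).2 ha).sub_const L
    rw [sub_self] at h
    refine h.congr fun i => ?_
    have : (i : ℝ) + 1 ≠ 0 := by positivity
    simp only [e, Nat.cast_add, Nat.cast_one]
    field_simp
  have hsplit : ∀ m : ℕ, ∑ i ∈ Finset.Icc 1 m, a i
      = ∑ i ∈ Finset.range m, e i + L * harmonic m := by
    intro m
    simp [sum_Icc_one_eq_sum_range_succ, harmonic_eq_sum_range_inv_succ, e, Finset.mul_sum]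
  have herr : Tendsto (fun m : ℕ => (∑ i ∈ Finset.range m, e i) / log m) atTop (𝓝 0) := by
    have h := (sum_range_isLittleO_harmonic he).tendsto_div_nhds_zero.mul tendsto_harmonic_div_log
    rw [zero_mul] at h
    refine h.congr' ?_
    filter_upwards [eventually_ne_atTop 0] with m hm
    have : (harmonic m : ℝ) ≠ 0 := by exact_mod_cast (harmonic_pos hm).ne'
    field_simp
  have h := herr.add (tendsto_harmonic_div_log.const_mul L)
  rw [zero_add, mul_one] at h
  refine h.congr fun m => ?_
  rw [hsplit, add_div, mul_div_assoc]

lemma tendsto_nat_mul_div_mul_add_one {a : ℝ} (ha : a ≠ 0) (b : ℝ) :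
    Tendsto (fun i : ℕ => (i : ℝ) * (b / (a * i + 1))) atTop (𝓝 (b / a)) := by
  have h : Tendsto (fun i : ℕ => b / (a + (i : ℝ)⁻¹)) atTop (𝓝 (b / (a + 0))) :=
    tendsto_const_nhds.div (tendsto_const_nhds.add tendsto_inv_atTop_nhds_zero_nat)
      (by rwa [add_zero])
  rw [add_zero] at h
  refine h.congr' ?_
  filter_upwards [eventually_ne_atTop 0] with i hi
  have : (i : ℝ) ≠ 0 := Nat.cast_ne_zero.2 hi
  field_simp

/-- For `d ≥ 2` and `θ ∈ ℝ`,
`lim_{m→∞} (1/log m) · Σ_{i=1}^m log(1 + ((d+1)/(d·i+1))·(e^θ − 1)) = ((d+1)/d)·(e^θ − 1)`. -/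
theorem normalized_cgf_tendsto_poisson_cgf (d : ℕ) (hd : 2 ≤ d) (θ : ℝ) :
    Tendsto (fun m : ℕ => (1 / Real.log m) *
        ∑ i ∈ Finset.Icc 1 m,
          Real.log (1 + (((d : ℝ) + 1) / ((d : ℝ) * (i : ℝ) + 1)) * (Real.exp θ - 1)))
      atTop (nhds ((((d : ℝ) + 1) / (d : ℝ)) * (Real.exp θ - 1))) := by
  have hd0 : (d : ℝ) ≠ 0 := Nat.cast_ne_zero.2 (by omega)
  have hmul := (tendsto_nat_mul_div_mul_add_one hd0 ((d : ℝ) + 1)).mul_const (exp θ - 1)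
  simp_rw [mul_assoc] at hmul
  simpa only [one_div_mul_eq_div] using
    tendsto_sum_Icc_div_log_of_tendsto_mul (tendsto_nat_mul_log_one_add_of_tendsto hmul)
end

section
/- Let d ≥ 2, let (B_i)_{i≥1} be independent Bernoulli random variables with P(B_i = 1) = (d+1)/(d·i+1), and set G_m := Σ_{i=1}^m B_i. Then G_m / log m converges in probability to (d+1)/d as m → ∞, i.e. for every ε > 0, P(|G_m/log m − (d+1)/d| > ε) → 0. -/
open MeasureTheory ProbabilityTheory Filter Topology Finset
open scoped ENNReal

/-!
A `{0,1}`-valued variable has variance at most its mean, so by independence `Var G_m ≤ E G_m`.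
Squeezing `(d+1)/(d i+1)` between `(d+1)/(d (i+1))` and `(d+1)/(d i)` and using the harmonic
bounds gives `E G_m = (d+1)/d · log m + O(1)`. Chebyshev's inequality at scale `ε log m / 2` then
bounds the probability of a deviation by `E G_m / (ε log m / 2)² = O(1 / log m)`.
-/

lemma tendsto_div_of_abs_sub_mul_le {ι : Type*} {l : Filter ι} {f a : ι → ℝ} {c K : ℝ}
    (ha : Tendsto a l atTop) (h : ∀ i, |f i - c * a i| ≤ K) :
    Tendsto (fun i => f i / a i) l (𝓝 c) := by
  have hsmall : Tendsto (fun i => (a i)⁻¹ * (f i - c * a i)) l (𝓝 0) :=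
    (tendsto_inv_atTop_zero.comp ha).zero_mul_isBoundedUnder_le
      (isBoundedUnder_of ⟨K, fun i => by simpa using h i⟩)
  have hc := hsmall.const_add c
  rw [add_zero] at hc
  refine hc.congr' ?_
  filter_upwards [ha.eventually_gt_atTop 0] with i hi
  field_simp
  ring

lemma sum_Icc_inv_add_one (m : ℕ) :
    ∑ i ∈ Icc 1 m, ((i : ℝ) + 1)⁻¹ = harmonic (m + 1) - 1 := by
  induction m with
  | zero => simp
  | succ n ih =>
    rw [sum_Icc_succ_top (by omega), ih, harmonic_succ (n + 1)]
    push_cast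
    ring

lemma abs_sum_Icc_div_mul_add_one_sub_log_le {d : ℝ} (hd : 1 ≤ d) (m : ℕ) :
    |∑ i ∈ Icc 1 m, (d + 1) / (d * i + 1) - (d + 1) / d * Real.log m| ≤ (d + 1) / d := by
  have hd0 : 0 < d := by linarith
  have hupper : ∑ i ∈ Icc 1 m, (d + 1) / (d * i + 1) ≤ (d + 1) / d * harmonic m := by
    rw [harmonic_eq_sum_Icc]
    push_cast
    rw [mul_sum]
    refine sum_le_sum fun i hi => ?_
    have hi : (0 : ℝ) < i := by exact_mod_cast (mem_Icc.mp hi).1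
    rw [← div_eq_mul_inv, div_div]
    exact div_le_div_of_nonneg_left (by positivity) (by positivity) (by linarith)
  have hlower : (d + 1) / d * (harmonic (m + 1) - 1) ≤ ∑ i ∈ Icc 1 m, (d + 1) / (d * i + 1) := by
    rw [← sum_Icc_inv_add_one, mul_sum]
    refine sum_le_sum fun i _ => ?_
    rw [← div_eq_mul_inv, div_div]
    exact div_le_div_of_nonneg_left (by positivity) (by positivity)
      (by nlinarith [(Nat.cast_nonneg i : (0 : ℝ) ≤ i)])
  have hH : (harmonic m : ℝ) ≤ 1 + Real.log m := harmonic_le_one_add_log m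
  have hH' : Real.log m ≤ harmonic (m + 1) := by
    calc Real.log m ≤ Real.log ↑(m + 1 + 1) := by
          rcases m.eq_zero_or_pos with rfl | hm
          · norm_num
            positivity
          · exact Real.log_le_log (by positivity) (by push_cast; linarith)
      _ ≤ harmonic (m + 1) := log_add_one_le_harmonic (m + 1)
  have hc : 0 ≤ (d + 1) / d := by positivity
  rw [abs_le]
  constructor <;> nlinarith [mul_le_mul_of_nonneg_left hH hc, mul_le_mul_of_nonneg_left hH' hc]

lemma tendsto_sum_Icc_div_mul_add_one_div_log {d : ℝ} (hd : 1 ≤ d) :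
    Tendsto (fun m : ℕ => (∑ i ∈ Icc 1 m, (d + 1) / (d * i + 1)) / Real.log m) atTop
      (𝓝 ((d + 1) / d)) :=
  tendsto_div_of_abs_sub_mul_le (Real.tendsto_log_atTop.comp tendsto_natCast_atTop_atTop)
    (abs_sum_Icc_div_mul_add_one_sub_log_le hd)

section

variable {Ω : Type*} [MeasurableSpace Ω] {P : Measure Ω}

lemma integral_natCast_eq_measureReal_eq_one {B : Ω → ℕ} (hB : Measurable B)
    (h01 : ∀ ω, B ω ≤ 1) : ∫ ω, (B ω : ℝ) ∂P = P.real {ω | B ω = 1} := by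
  have hind : (fun ω => (B ω : ℝ)) = {ω | B ω = 1}.indicator 1 := by
    funext ω
    rcases Nat.le_one_iff_eq_zero_or_eq_one.mp (h01 ω) with h | h <;> simp [h]
  have hmeas : MeasurableSet {ω | B ω = 1} := hB (measurableSet_singleton 1)
  rw [hind, integral_indicator_one hmeas]

lemma memLp_of_mem_Icc [IsFiniteMeasure P] {X : Ω → ℝ} (hX : AEStronglyMeasurable X P)
    (h01 : ∀ ω, X ω ∈ Set.Icc 0 1) (p : ℝ≥0∞) : MemLp X p P :=
  MemLp.of_bound hX 1 (ae_of_all _ fun ω => by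
    rw [Real.norm_eq_abs, abs_of_nonneg (h01 ω).1]
    exact (h01 ω).2)

lemma tendsto_measure_lt_abs_div_sub_of_variance_le_integral [IsFiniteMeasure P]
    {ι : Type*} {l : Filter ι} {S : ι → Ω → ℝ} (hS : ∀ m, MemLp (S m) 2 P)
    (hvar : ∀ m, Var[S m; P] ≤ P[S m])
    {a : ι → ℝ} (ha : Tendsto a l atTop) {c : ℝ}
    (hmean : Tendsto (fun m => P[S m] / a m) l (𝓝 c)) {ε : ℝ} (hε : 0 < ε) :
    Tendsto (fun m => P {ω | ε < |S m ω / a m - c|}) l (𝓝 0) := by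
  have hbound : Tendsto (fun m => ENNReal.ofReal (P[S m] / (ε / 2 * a m) ^ 2)) l (𝓝 0) := by
    have h := (hmean.mul (tendsto_inv_atTop_zero.comp ha)).div_const ((ε / 2) ^ 2)
    rw [mul_zero, zero_div] at h
    refine ENNReal.ofReal_zero ▸ (ENNReal.tendsto_ofReal h).congr fun m => ?_
    simp only [Function.comp_apply]
    ring_nf
  refine tendsto_of_tendsto_of_tendsto_of_le_of_le' tendsto_const_nhds hbound
    (Eventually.of_forall fun _ => zero_le) ?_
  filter_upwards [ha.eventually_gt_atTop 0,
    hmean.eventually (Metric.closedBall_mem_nhds c (half_pos hε))] with m ha_pos hmean_close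
  rw [Real.dist_eq] at hmean_close
  have hsub : {ω | ε < |S m ω / a m - c|} ⊆ {ω | ε / 2 * a m ≤ |S m ω - P[S m]|} := by
    refine Set.ofPred_subset_ofPred.mpr fun ω hω => ?_
    have htri := abs_sub_abs_le_abs_sub (S m ω / a m - c) (P[S m] / a m - c)
    rw [sub_sub_sub_cancel_right, ← sub_div, abs_div, abs_of_pos ha_pos] at htri
    rw [← le_div_iff₀ ha_pos]
    linarith
  calc P {ω | ε < |S m ω / a m - c|}
      ≤ P {ω | ε / 2 * a m ≤ |S m ω - P[S m]|} := measure_mono hsub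
    _ ≤ ENNReal.ofReal (Var[S m; P] / (ε / 2 * a m) ^ 2) :=
      meas_ge_le_variance_div_sq (hS m) (by positivity)
    _ ≤ ENNReal.ofReal (P[S m] / (ε / 2 * a m) ^ 2) :=
      ENNReal.ofReal_le_ofReal (div_le_div_of_nonneg_right (hvar m) (by positivity))

variable [IsProbabilityMeasure P]

lemma variance_le_integral_of_mem_Icc {X : Ω → ℝ} (hX : AEStronglyMeasurable X P)
    (h01 : ∀ ω, X ω ∈ Set.Icc 0 1) : Var[X; P] ≤ P[X] := by
  have hXL2 := memLp_of_mem_Icc hX h01 2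
  have hsq : ∫ ω, (X ^ 2) ω ∂P ≤ P[X] :=
    integral_mono hXL2.integrable_sq (hXL2.integrable one_le_two) fun ω => by
      obtain ⟨h0, h1⟩ := h01 ω
      simp only [Pi.pow_apply]
      nlinarith
  rw [variance_eq_sub hXL2]
  nlinarith [sq_nonneg P[X]]

lemma variance_sum_le_integral_sum_of_mem_Icc {ι : Type*} {X : ι → Ω → ℝ} {s : Finset ι}
    (hX : ∀ i ∈ s, AEStronglyMeasurable (X i) P) (h01 : ∀ i ∈ s, ∀ ω, X i ω ∈ Set.Icc 0 1)
    (hindep : (s : Set ι).Pairwise fun i j => X i ⟂ᵢ[P] X j) :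
    Var[∑ i ∈ s, X i; P] ≤ P[∑ i ∈ s, X i] := by
  have hint : ∀ i ∈ s, Integrable (X i) P := fun i hi =>
    (memLp_of_mem_Icc (hX i hi) (h01 i hi) 1).integrable le_rfl
  simp only [Finset.sum_apply]
  rw [IndepFun.variance_sum (fun i hi => memLp_of_mem_Icc (hX i hi) (h01 i hi) 2) hindep,
    integral_finsetSum s hint]
  exact sum_le_sum fun i hi => variance_le_integral_of_mem_Icc (hX i hi) (h01 i hi)

end

/-- Let `d ≥ 2`, let `(B_i)_{i≥1}` be independent Bernoulli random variables with
`P(B_i = 1) = (d+1)/(d·i+1)`, and `G_m = Σ_{i=1}^m B_i`.  Then `G_m / log m` converges in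
probability to `(d+1)/d` as `m → ∞`: for every `ε > 0`,
`P(|G_m/log m − (d+1)/d| > ε) → 0`. -/
theorem generation_law_of_large_numbers (d : ℕ) (hd : 2 ≤ d)
    {Ω : Type*} [MeasurableSpace Ω] (P : Measure Ω) [IsProbabilityMeasure P]
    (B : ℕ → Ω → ℕ) (hBmeas : ∀ i, Measurable (B i))
    (hB01 : ∀ i ω, B i ω ≤ 1)
    (hBdist : ∀ i : ℕ, 1 ≤ i →
      P {ω | B i ω = 1} = ENNReal.ofReal (((d : ℝ) + 1) / ((d : ℝ) * i + 1)))
    (hBindep : iIndepFun B P) :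
    ∀ ε : ℝ, 0 < ε →
      Tendsto (fun m : ℕ =>
          P {ω | ε < |((∑ i ∈ Finset.Icc 1 m, B i ω : ℕ) : ℝ) / Real.log m -
            ((d : ℝ) + 1) / d|})
        atTop (nhds 0) := by
  intro ε hε
  set X : ℕ → Ω → ℝ := fun i ω => B i ω
  have hX01 : ∀ i ω, X i ω ∈ Set.Icc 0 1 := fun i ω =>
    ⟨Nat.cast_nonneg _, Nat.cast_le_one.mpr (hB01 i ω)⟩
  have hXmeas : ∀ i, AEStronglyMeasurable (X i) P := fun i =>
    (measurable_from_top.comp (hBmeas i)).aestronglyMeasurable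
  have hXindep : iIndepFun X P := hBindep.comp _ fun _ => measurable_from_top
  have hmean : ∀ m : ℕ,
      P[∑ i ∈ Icc 1 m, X i] = ∑ i ∈ Icc 1 m, ((d : ℝ) + 1) / (d * (i : ℝ) + 1) := by
    intro m
    simp only [Finset.sum_apply]
    rw [integral_finsetSum _ fun i _ =>
      (memLp_of_mem_Icc (hXmeas i) (hX01 i) 1).integrable le_rfl]
    refine sum_congr rfl fun i hi => ?_
    rw [integral_natCast_eq_measureReal_eq_one (hBmeas i) (hB01 i), measureReal_def,
      hBdist i (mem_Icc.mp hi).1, ENNReal.toReal_ofReal (by positivity)]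
  have hd1 : (1 : ℝ) ≤ d := by exact_mod_cast (by omega : 1 ≤ d)
  have key := tendsto_measure_lt_abs_div_sub_of_variance_le_integral
    (S := fun m => ∑ i ∈ Icc 1 m, X i)
    (fun m => memLp_finsetSum' _ fun i _ => memLp_of_mem_Icc (hXmeas i) (hX01 i) 2)
    (fun m => variance_sum_le_integral_sum_of_mem_Icc (fun i _ => hXmeas i) (fun i _ => hX01 i)
      fun i _ j _ hij => hXindep.indepFun hij)
    (Real.tendsto_log_atTop.comp tendsto_natCast_atTop_atTop)
    (by simpa only [hmean, Function.comp_apply] using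
      tendsto_sum_Icc_div_mul_add_one_div_log hd1) hε
  simpa [X] using key
end

section
/- Let d ≥ 2, let (B_i)_{i≥1} be independent Bernoulli random variables with P(B_i = 1) = (d+1)/(d·i+1), and set G_m := Σ_{i=1}^m B_i. Let c̃_d be the unique c > (d+1)/d with f_d(c) = −1, where f_d(c) = c − (d+1)/d − c·log(d·c/(d+1)). Then for every c > c̃_d, Σ_{m=1}^∞ P(G_m > c·log m) < ∞. -/
open MeasureTheory ProbabilityTheory Filter
open scoped ENNReal

/-- The function `f_d(c) = c − (d+1)/d − c·log(d·c/(d+1))`. -/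
noncomputable def fd (d : ℕ) (c : ℝ) : ℝ :=
  c - ((d : ℝ) + 1) / d - c * Real.log ((d : ℝ) * c / ((d : ℝ) + 1))

/-!
Chernoff's bound for the Poisson-binomial variable `G_m` with parameter `t ≥ 0` gives
`P(G_m > c log m) ≤ exp(-t c log m + (e^t - 1) Σ p_i)`, and `Σ_{i ≤ m} p_i ≤ (d+1)/d · (1 + log m)`,
so the tail is `O(m^((e^t-1)(d+1)/d - t c))`. For `t = log(d c̃/(d+1))`, the parameter optimal at
`c̃`, this exponent is `f_d(c̃) - t (c - c̃) = -1 - t (c - c̃) < -1`.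
-/

open Real Finset

lemma sum_Icc_div_mul_add_one_le {d : ℝ} (hd : 0 < d) (m : ℕ) :
    ∑ i ∈ Icc 1 m, (d + 1) / (d * i + 1) ≤ (d + 1) / d * (1 + log m) := by
  calc ∑ i ∈ Icc 1 m, (d + 1) / (d * i + 1)
      ≤ ∑ i ∈ Icc 1 m, (d + 1) / d * (i : ℝ)⁻¹ := by
        gcongr with i hi
        have hi : (0 : ℝ) < i := by exact_mod_cast (mem_Icc.1 hi).1
        rw [← div_eq_mul_inv, div_div]
        gcongr
        linarith
    _ = (d + 1) / d * harmonic m := by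
        rw [← mul_sum, harmonic_eq_sum_Icc]; push_cast; rfl
    _ ≤ (d + 1) / d * (1 + log m) := by
        gcongr
        exact harmonic_le_one_add_log m

section Chernoff

variable {Ω ι : Type*} [MeasurableSpace Ω] {μ : Measure Ω} [IsProbabilityMeasure μ]

lemma mgf_natCast_of_le_one {X : Ω → ℕ} (hX : Measurable X) (hX01 : ∀ ω, X ω ≤ 1) (t : ℝ) :
    mgf (fun ω => (X ω : ℝ)) μ t = 1 + (exp t - 1) * μ.real {ω | X ω = 1} := by
  have hA : MeasurableSet {ω | X ω = 1} := hX (measurableSet_singleton 1)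
  have hexp : (fun ω => exp (t * X ω))
      = fun ω => 1 + (exp t - 1) * {ω | X ω = 1}.indicator 1 ω := by
    funext ω
    rcases Nat.le_one_iff_eq_zero_or_eq_one.mp (hX01 ω) with h | h <;> simp [h]
  rw [mgf, hexp, integral_add (integrable_const _)
    (((integrable_indicator_iff hA).2 (integrable_const 1).integrableOn).const_mul _),
    integral_const_mul, integral_indicator_one hA]
  simp

lemma mgf_natCast_le_exp_of_le_one {X : Ω → ℕ} (hX : Measurable X) (hX01 : ∀ ω, X ω ≤ 1)
    (t : ℝ) : mgf (fun ω => (X ω : ℝ)) μ t ≤ exp ((exp t - 1) * μ.real {ω | X ω = 1}) := by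
  rw [mgf_natCast_of_le_one hX hX01, add_comm]
  exact add_one_le_exp _

theorem measureReal_sum_ge_le_exp {X : ι → Ω → ℕ} (hX : ∀ i, Measurable (X i))
    (hX01 : ∀ i ω, X i ω ≤ 1) (hindep : iIndepFun X μ) (s : Finset ι) (a : ℝ) {t : ℝ}
    (ht : 0 ≤ t) :
    μ.real {ω | a ≤ ∑ i ∈ s, (X i ω : ℝ)}
      ≤ exp (-t * a + (exp t - 1) * ∑ i ∈ s, μ.real {ω | X i ω = 1}) := by
  set Y : ι → Ω → ℝ := fun i ω => X i ω
  have hY : ∀ i, Measurable (Y i) := fun i => measurable_from_nat.comp (hX i)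
  have hYindep : iIndepFun Y μ := hindep.comp _ fun _ => measurable_from_nat
  have hint : Integrable (fun ω => exp (t * (∑ i ∈ s, Y i) ω)) μ :=
    hYindep.integrable_exp_mul_sum hY fun i _ =>
      integrable_exp_mul_of_mem_Icc (a := 0) (b := 1) (hY i).aemeasurable
        (ae_of_all _ fun ω => ⟨Nat.cast_nonneg _, Nat.cast_le_one.2 (hX01 i ω)⟩)
  calc μ.real {ω | a ≤ ∑ i ∈ s, (X i ω : ℝ)}
      ≤ exp (-t * a) * mgf (∑ i ∈ s, Y i) μ t := by
        simpa [Y] using measure_ge_le_exp_mul_mgf a ht hint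
    _ ≤ exp (-t * a) * ∏ i ∈ s, exp ((exp t - 1) * μ.real {ω | X i ω = 1}) := by
        rw [hYindep.mgf_sum hY]
        gcongr with i
        · exact fun i _ => mgf_nonneg
        · exact mgf_natCast_le_exp_of_le_one (hX i) (hX01 i) t
    _ = _ := by rw [← exp_sum, ← exp_add, mul_sum]

lemma measureReal_sum_gt_mul_log_le_rpow {X : ℕ → Ω → ℕ} (hX : ∀ i, Measurable (X i))
    (hX01 : ∀ i ω, X i ω ≤ 1) (hindep : iIndepFun X μ) {d : ℝ} (hd : 0 < d)
    (hp : ∀ i, 1 ≤ i → μ.real {ω | X i ω = 1} ≤ (d + 1) / (d * i + 1))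
    (c : ℝ) {t : ℝ} (ht : 0 ≤ t) {m : ℕ} (hm : 0 < m) :
    μ.real {ω | c * log m < ∑ i ∈ Icc 1 m, (X i ω : ℝ)}
      ≤ exp ((exp t - 1) * ((d + 1) / d)) * (m : ℝ) ^ ((exp t - 1) * ((d + 1) / d) - t * c) := by
  have het : 0 ≤ exp t - 1 := by linarith [one_le_exp ht]
  calc μ.real {ω | c * log m < ∑ i ∈ Icc 1 m, (X i ω : ℝ)}
      ≤ μ.real {ω | c * log m ≤ ∑ i ∈ Icc 1 m, (X i ω : ℝ)} :=
        measureReal_mono (Set.ofPred_subset_ofPred.2 fun _ => le_of_lt)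
    _ ≤ exp (-t * (c * log m) + (exp t - 1) * ∑ i ∈ Icc 1 m, μ.real {ω | X i ω = 1}) :=
        measureReal_sum_ge_le_exp hX hX01 hindep _ _ ht
    _ ≤ exp (-t * (c * log m) + (exp t - 1) * ((d + 1) / d * (1 + log m))) := by
        gcongr
        exact (sum_le_sum fun i hi => hp i (mem_Icc.1 hi).1).trans
          (sum_Icc_div_mul_add_one_le hd m)
    _ = _ := by
        rw [rpow_def_of_pos (by exact_mod_cast hm), ← exp_add]
        ring_nf

end Chernoff

/-- Let `d ≥ 2`, let `(B_i)_{i≥1}` be independent Bernoulli random variables with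
`P(B_i = 1) = (d+1)/(d·i+1)`, and `G_m = Σ_{i=1}^m B_i`.  Let `c̃_d` be the unique `c > (d+1)/d`
with `f_d(c) = −1`.  Then for every `c > c̃_d`, `Σ_{m=1}^∞ P(G_m > c·log m) < ∞`. -/
theorem generation_tail_summable (d : ℕ) (hd : 2 ≤ d)
    {Ω : Type*} [MeasurableSpace Ω] (P : Measure Ω) [IsProbabilityMeasure P]
    (B : ℕ → Ω → ℕ) (hBmeas : ∀ i, Measurable (B i))
    (hB01 : ∀ i ω, B i ω ≤ 1)
    (hBdist : ∀ i : ℕ, 1 ≤ i →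
      P {ω | B i ω = 1} = ENNReal.ofReal (((d : ℝ) + 1) / ((d : ℝ) * i + 1)))
    (hBindep : iIndepFun B P)
    (ctilde : ℝ) (hct : ((d : ℝ) + 1) / d < ctilde) (hfct : fd d ctilde = -1) :
    ∀ c : ℝ, ctilde < c →
      ∑' m : ℕ, P {ω | c * Real.log m < ((∑ i ∈ Finset.Icc 1 m, B i ω : ℕ) : ℝ)} < ⊤ := by
  intro c hc
  have hd0 : (0 : ℝ) < d := by exact_mod_cast (by omega : 0 < d)
  have hp : ∀ i, 1 ≤ i → P.real {ω | B i ω = 1} ≤ (d + 1) / (d * i + 1) := fun i hi => by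
    rw [measureReal_def, hBdist i hi, ENNReal.toReal_ofReal (by positivity)]
  set t := log (d * ctilde / (d + 1))
  have hct' : 1 < d * ctilde / (d + 1) := by
    rw [one_lt_div (by positivity)]; rwa [div_lt_iff₀' hd0] at hct
  have ht : 0 < t := log_pos hct'
  have hexponent : (exp t - 1) * ((d + 1) / d) - t * c < -1 := by
    have hK : (exp t - 1) * ((d + 1) / d) = ctilde - (d + 1) / d := by
      rw [exp_log (by positivity)]; field_simp
    have hfd : fd d ctilde = ctilde - (d + 1) / d - ctilde * t := rfl
    rw [hK]
    linarith [mul_pos ht (sub_pos.2 hc)]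
  have hsumm : Summable fun m : ℕ =>
      P.real {ω | c * log m < ((∑ i ∈ Icc 1 m, B i ω : ℕ) : ℝ)} := by
    refine ((summable_nat_rpow.2 hexponent).mul_left
      (exp ((exp t - 1) * ((d + 1) / d)))).of_norm_bounded_eventually_nat
      (eventually_atTop.2 ⟨1, fun m hm => ?_⟩)
    rw [Real.norm_of_nonneg measureReal_nonneg]
    push_cast
    exact measureReal_sum_gt_mul_log_le_rpow hBmeas hB01 hBindep hd0 hp c ht.le hm
  calc ∑' m : ℕ, P {ω | c * log m < ((∑ i ∈ Icc 1 m, B i ω : ℕ) : ℝ)}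
      = ∑' m : ℕ, ENNReal.ofReal (P.real {ω | c * log m < ((∑ i ∈ Icc 1 m, B i ω : ℕ) : ℝ)}) :=
        tsum_congr fun _ => (ofReal_measureReal).symm
    _ = ENNReal.ofReal (∑' m : ℕ, P.real {ω | c * log m < ((∑ i ∈ Icc 1 m, B i ω : ℕ) : ℝ)}) :=
        (ENNReal.ofReal_tsum_of_nonneg (fun _ => measureReal_nonneg) hsumm).symm
    _ < ⊤ := ENNReal.ofReal_lt_top
end

section
/- Let d ≥ 2 and for integers k ≥ d+1 define p_k := (d/(2d+1)) · (Γ(k − d + 2/(d−1)) / Γ(1 + 2/(d−1))) · (Γ(2 + (d+2)/(d−1)) / Γ(k + 1 − d + (d+2)/(d−1))), where Γ is the Gamma function. Then p_k ≥ 0 for all k ≥ d+1 and Σ_{k=d+1}^∞ p_k = 1; that is, (p_k)_{k≥d+1} is a probability distribution. -/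
/-!
With `a = 1 + 2/(d-1)` and `b = 1 + (d+2)/(d-1)`, the term `p_{d+1+n}` is a constant multiple of
`Γ(n+a)/Γ(n+b+1)`. By `Γ(s+1) = s Γ(s)` these terms telescope:
`(b-a) Γ(n+a)/Γ(n+b+1) = Γ(n+a)/Γ(n+b) - Γ(n+a+1)/Γ(n+b+1)`, and `Γ(n+a)/Γ(n+b) → 0` because
`b ≥ a + 1`. So the series sums to `Γ(a)/((b-a) Γ(b))`, and the normalising constant of `p` is
exactly its reciprocal.
-/

open Real

/-- The limiting degree distribution of a `d`-dimensional random Apollonian network: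
`p_k = (d/(2d+1)) · (Γ(k − d + 2/(d−1)) / Γ(1 + 2/(d−1)))
     · (Γ(2 + (d+2)/(d−1)) / Γ(k + 1 − d + (d+2)/(d−1)))`. -/
noncomputable def apollonianDegreeDist (d k : ℕ) : ℝ :=
  ((d : ℝ) / (2 * (d : ℝ) + 1)) *
    (Real.Gamma ((k : ℝ) - (d : ℝ) + 2 / ((d : ℝ) - 1)) /
      Real.Gamma (1 + 2 / ((d : ℝ) - 1))) *
    (Real.Gamma (2 + ((d : ℝ) + 2) / ((d : ℝ) - 1)) /
      Real.Gamma ((k : ℝ) + 1 - (d : ℝ) + ((d : ℝ) + 2) / ((d : ℝ) - 1)))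

open Filter Topology

theorem hasSum_sub_succ_of_antitone {f : ℕ → ℝ} {l : ℝ} (hf : Antitone f)
    (hl : Tendsto f atTop (𝓝 l)) : HasSum (fun n => f n - f (n + 1)) (f 0 - l) := by
  rw [hasSum_iff_tendsto_nat_of_nonneg fun n => sub_nonneg.2 (hf n.le_succ)]
  simp only [Finset.sum_range_sub']
  exact tendsto_const_nhds.sub hl

namespace Real

theorem Gamma_div_Gamma_sub_Gamma_div_Gamma_add_one {a b : ℝ} (ha : a ≠ 0) (hb : 0 < b) :
    Gamma a / Gamma b - Gamma (a + 1) / Gamma (b + 1) = (b - a) * (Gamma a / Gamma (b + 1)) := by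
  have hΓb : Gamma b ≠ 0 := (Gamma_pos_of_pos hb).ne'
  rw [Gamma_add_one ha, Gamma_add_one hb.ne']
  field_simp

theorem tendsto_Gamma_add_div_Gamma_add {a b : ℝ} (ha : 0 < a) (hab : a + 1 ≤ b) :
    Tendsto (fun n : ℕ => Gamma (n + a) / Gamma (n + b)) atTop (𝓝 0) := by
  have hbound : ∀ n : ℕ, 1 ≤ n → Gamma (n + a) / Gamma (n + b) ≤ 1 / (n + a) := by
    intro n hn
    have hn' : (1 : ℝ) ≤ n := by exact_mod_cast hn
    have hmono : Gamma (n + a + 1) ≤ Gamma (n + b) :=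
      Gamma_strictMonoOn_Ici.monotoneOn (Set.mem_Ici.2 (by linarith))
        (Set.mem_Ici.2 (by linarith)) (by linarith)
    calc Gamma (n + a) / Gamma (n + b) ≤ Gamma (n + a) / Gamma (n + a + 1) := by
          gcongr
      _ = 1 / (n + a) := by
          rw [Gamma_add_one (by positivity), div_mul_cancel_right₀ (by positivity), one_div]
  have hinv : Tendsto (fun n : ℕ => 1 / ((n : ℝ) + a)) atTop (𝓝 0) :=
    tendsto_const_nhds.div_atTop (tendsto_atTop_add_const_right _ a tendsto_natCast_atTop_atTop)
  have hb : 0 < b := by linarith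
  refine squeeze_zero' (Eventually.of_forall fun n => by positivity) ?_ hinv
  exact eventually_atTop.2 ⟨1, hbound⟩

theorem hasSum_Gamma_add_div_Gamma_add_add_one {a b : ℝ} (ha : 0 < a) (hab : a + 1 ≤ b) :
    HasSum (fun n : ℕ => Gamma (n + a) / Gamma (n + b + 1)) (Gamma a / ((b - a) * Gamma b)) := by
  set f : ℕ → ℝ := fun n => Gamma (n + a) / Gamma (n + b)
  have hb : 0 < b := by linarith
  have hba : b - a ≠ 0 := by linarith
  have hstep : ∀ n : ℕ, f n - f (n + 1) = (b - a) * (Gamma (n + a) / Gamma (n + b + 1)) := by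
    intro n
    simp only [f, Nat.cast_succ, add_right_comm _ (1 : ℝ)]
    rw [Gamma_div_Gamma_sub_Gamma_div_Gamma_add_one (by positivity) (by positivity)]
    ring
  have hanti : Antitone f := antitone_nat_of_succ_le fun n => by
    rw [← sub_nonneg, hstep]
    have : 0 ≤ b - a := by linarith
    positivity
  have htel := hasSum_sub_succ_of_antitone hanti (tendsto_Gamma_add_div_Gamma_add ha hab)
  simp only [hstep, sub_zero, f, Nat.cast_zero, zero_add] at htel
  have hsum := htel.mul_left (b - a)⁻¹
  simp only [inv_mul_cancel_left₀ hba] at hsum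
  rwa [div_mul_eq_div_div_swap, div_eq_inv_mul]

end Real

theorem apollonianDegreeDist_self_add_one_add (d j : ℕ) :
    apollonianDegreeDist d (d + 1 + j) =
      d / (2 * d + 1) * (Gamma (1 + (d + 2) / (d - 1) + 1) / Gamma (1 + 2 / (d - 1))) *
        (Gamma (j + (1 + 2 / (d - 1))) / Gamma (j + (1 + (d + 2) / (d - 1)) + 1)) := by
  unfold apollonianDegreeDist
  push_cast
  ring_nf

/-- for `d ≥ 2`, the numbers `p_k`, `k ≥ d+1`, are nonnegative and sum to `1`,
i.e. `(p_k)_{k ≥ d+1}` is a probability distribution. -/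
theorem apollonianDegreeDist_isProbability (d : ℕ) (hd : 2 ≤ d) :
    (∀ k : ℕ, d + 1 ≤ k → 0 ≤ apollonianDegreeDist d k) ∧
    HasSum (fun j : ℕ => apollonianDegreeDist d (d + 1 + j)) 1 := by
  have hd1 : (0 : ℝ) < d - 1 := by
    rw [sub_pos]
    exact_mod_cast hd
  set a : ℝ := 1 + 2 / (d - 1)
  set b : ℝ := 1 + (d + 2) / (d - 1)
  have ha : 0 < a := by positivity
  have hb : 0 < b := by positivity
  have hba : b - a = d / (d - 1) := by ring
  have hab : a + 1 ≤ b := by linarith [(one_le_div hd1).2 (by linarith : (d : ℝ) - 1 ≤ d)]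
  have hterm : ∀ j : ℕ, apollonianDegreeDist d (d + 1 + j) =
      d / (2 * d + 1) * (Gamma (b + 1) / Gamma a) * (Gamma (j + a) / Gamma (j + b + 1)) :=
    apollonianDegreeDist_self_add_one_add d
  have hnorm :
      d / (2 * d + 1) * (Gamma (b + 1) / Gamma a) * (Gamma a / ((b - a) * Gamma b)) = 1 := by
    rw [Gamma_add_one hb.ne', hba]
    field_simp
    simp only [b]
    field_simp
    ring
  refine ⟨fun k hk => ?_, ?_⟩
  · obtain ⟨j, rfl⟩ := Nat.exists_eq_add_of_le hk
    rw [hterm]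
    positivity
  · simpa only [hterm, hnorm] using (hasSum_Gamma_add_div_Gamma_add_add_one ha hab).mul_left
      (d / (2 * d + 1) * (Gamma (b + 1) / Gamma a))
end

section
/- Let d ≥ 2, set A_k := (k − d)·(d − 1) + 2 for k ≥ d+1, and for integers k ≥ d+1 define p_k := (d/(2d+1)) · (Γ(k − d + 2/(d−1)) / Γ(1 + 2/(d−1))) · (Γ(2 + (d+2)/(d−1)) / Γ(k + 1 − d + (d+2)/(d−1))). Then (p_k) is the unique solution of the recursion p_k·(d + A_k) = p_{k−1}·A_{k−1} + d·1{k = d+1} for all k ≥ d+1 (with the convention p_d := 0); equivalently, p_{d+1} = d/(2d+1) and p_k = p_{k−1} · ((k−1)(d−1) − d² + d + 2) / (k(d−1) − d² + 2d + 2) for all k ≥ d+2. -/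
open Real

/-- `p_k` extended by the convention `p_k := 0` for `k ≤ d`. -/
noncomputable def apollonianDegreeDistExt (d k : ℕ) : ℝ :=
  if k ≤ d then 0 else apollonianDegreeDist d k

/-- `A_k = (k − d)·(d − 1) + 2`, the number of active cliques containing a degree-`k` vertex. -/
noncomputable def activeCliques (d k : ℕ) : ℝ :=
  ((k : ℝ) - (d : ℝ)) * ((d : ℝ) - 1) + 2

lemma apollonian_base (d : ℕ) (hd : 2 ≤ d) :
    apollonianDegreeDist d (d + 1) = (d : ℝ) / (2 * (d : ℝ) + 1) := by
  have hD : (2 : ℝ) ≤ (d : ℝ) := by exact_mod_cast hd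
  have hD1 : (0:ℝ) < (d:ℝ) - 1 := by linarith
  have hg1 : Real.Gamma (1 + 2 / ((d:ℝ) - 1)) ≠ 0 :=
    (Real.Gamma_pos_of_pos (by positivity)).ne'
  have hg2 : Real.Gamma (2 + ((d:ℝ) + 2) / ((d:ℝ) - 1)) ≠ 0 :=
    (Real.Gamma_pos_of_pos (by positivity)).ne'
  unfold apollonianDegreeDist
  push_cast
  have e1 : ((d:ℝ) + 1) - (d:ℝ) + 2 / ((d:ℝ) - 1) = 1 + 2 / ((d:ℝ) - 1) := by ring
  have e2 : ((d:ℝ) + 1) + 1 - (d:ℝ) + ((d:ℝ) + 2) / ((d:ℝ) - 1)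
      = 2 + ((d:ℝ) + 2) / ((d:ℝ) - 1) := by ring
  rw [e1, e2, div_self hg1, div_self hg2]
  ring

lemma gamma_alg (c a b ga gb g1 g2 e : ℝ) (hb : b ≠ 0) (hgb : gb ≠ 0) (hg1 : g1 ≠ 0) :
    c * (a * ga / g1) * (g2 / (b * gb)) * (b * e) = c * (ga / g1) * (g2 / gb) * (a * e) := by
  field_simp

lemma apollonian_step (d : ℕ) (hd : 2 ≤ d) (k : ℕ) (hk : d + 1 ≤ k) :
    apollonianDegreeDist d (k + 1) * ((d : ℝ) + activeCliques d (k + 1)) =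
      apollonianDegreeDist d k * activeCliques d k := by
  have hD : (2 : ℝ) ≤ (d : ℝ) := by exact_mod_cast hd
  have hK : (d : ℝ) + 1 ≤ (k : ℝ) := by
    have := (Nat.cast_le (α := ℝ)).mpr hk
    push_cast at this
    linarith
  have hD1 : (0:ℝ) < (d:ℝ) - 1 := by linarith
  have hx : (0:ℝ) < 2 / ((d:ℝ) - 1) := by positivity
  have hy : (0:ℝ) < ((d:ℝ) + 2) / ((d:ℝ) - 1) := by positivity
  have ha : (0:ℝ) < (k:ℝ) - (d:ℝ) + 2 / ((d:ℝ) - 1) := by linarith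
  have hb : (0:ℝ) < (k:ℝ) + 1 - (d:ℝ) + ((d:ℝ) + 2) / ((d:ℝ) - 1) := by linarith
  have hg1 : Real.Gamma (1 + 2 / ((d:ℝ) - 1)) ≠ 0 :=
    (Real.Gamma_pos_of_pos (by positivity)).ne'
  have hg2 : Real.Gamma ((k:ℝ) + 1 - (d:ℝ) + ((d:ℝ) + 2) / ((d:ℝ) - 1)) ≠ 0 :=
    (Real.Gamma_pos_of_pos hb).ne'
  have hga : Real.Gamma ((k:ℝ) - (d:ℝ) + 2 / ((d:ℝ) - 1)) ≠ 0 :=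
    (Real.Gamma_pos_of_pos ha).ne'
  unfold apollonianDegreeDist activeCliques
  push_cast
  have e1 : ((k:ℝ) + 1) - (d:ℝ) + 2 / ((d:ℝ) - 1)
      = ((k:ℝ) - (d:ℝ) + 2 / ((d:ℝ) - 1)) + 1 := by ring
  have e2 : ((k:ℝ) + 1) + 1 - (d:ℝ) + ((d:ℝ) + 2) / ((d:ℝ) - 1)
      = ((k:ℝ) + 1 - (d:ℝ) + ((d:ℝ) + 2) / ((d:ℝ) - 1)) + 1 := by ring
  rw [e1, e2, Real.Gamma_add_one ha.ne', Real.Gamma_add_one hb.ne']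
  have key : (d:ℝ) + ((((k:ℝ) + 1) - (d:ℝ)) * ((d:ℝ) - 1) + 2)
      = ((k:ℝ) + 1 - (d:ℝ) + ((d:ℝ) + 2) / ((d:ℝ) - 1)) * ((d:ℝ) - 1) := by
    field_simp; ring
  have key2 : ((k:ℝ) - (d:ℝ)) * ((d:ℝ) - 1) + 2
      = ((k:ℝ) - (d:ℝ) + 2 / ((d:ℝ) - 1)) * ((d:ℝ) - 1) := by
    field_simp
  rw [key, key2]
  exact gamma_alg _ _ _ _ _ _ _ _ hb.ne' hg2 hg1

/-- with the convention `p_d := 0`, the sequence `(p_k)` is the unique solution of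
the recursion `p_k·(d + A_k) = p_{k−1}·A_{k−1} + d·1{k = d+1}` for all `k ≥ d+1`; equivalently,
`p_{d+1} = d/(2d+1)` and
`p_k = p_{k−1} · ((k−1)(d−1) − d² + d + 2) / (k(d−1) − d² + 2d + 2)` for all `k ≥ d+2`. -/
theorem apollonianDegreeDist_recursion (d : ℕ) (hd : 2 ≤ d) :
    (∀ k : ℕ, d + 1 ≤ k →
      apollonianDegreeDistExt d k * ((d : ℝ) + activeCliques d k) =
        apollonianDegreeDistExt d (k - 1) * activeCliques d (k - 1) +
          (if k = d + 1 then (d : ℝ) else 0)) ∧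
    (∀ q : ℕ → ℝ, q d = 0 →
      (∀ k : ℕ, d + 1 ≤ k →
        q k * ((d : ℝ) + activeCliques d k) =
          q (k - 1) * activeCliques d (k - 1) + (if k = d + 1 then (d : ℝ) else 0)) →
      ∀ k : ℕ, d + 1 ≤ k → q k = apollonianDegreeDist d k) ∧
    apollonianDegreeDist d (d + 1) = (d : ℝ) / (2 * (d : ℝ) + 1) ∧
    (∀ k : ℕ, d + 2 ≤ k →
      apollonianDegreeDist d k =
        apollonianDegreeDist d (k - 1) *
          (((k : ℝ) - 1) * ((d : ℝ) - 1) - (d : ℝ) ^ 2 + (d : ℝ) + 2) /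
            ((k : ℝ) * ((d : ℝ) - 1) - (d : ℝ) ^ 2 + 2 * (d : ℝ) + 2)) := by
  have hD : (2 : ℝ) ≤ (d : ℝ) := by exact_mod_cast hd
  have base := apollonian_base d hd
  have hA1 : activeCliques d (d + 1) = (d : ℝ) + 1 := by
    unfold activeCliques; push_cast; ring
  have h2d : (2 * (d:ℝ) + 1) ≠ 0 := by positivity
  refine ⟨?_, ?_, base, ?_⟩
  · -- recursion for the extended sequence
    intro k hk
    rcases eq_or_lt_of_le hk with h | h
    · -- k = d + 1
      subst h
      rw [if_pos rfl, Nat.add_sub_cancel]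
      have e1 : apollonianDegreeDistExt d (d + 1) = apollonianDegreeDist d (d + 1) := by
        unfold apollonianDegreeDistExt; rw [if_neg (by omega)]
      have e2 : apollonianDegreeDistExt d d = 0 := by
        unfold apollonianDegreeDistExt; rw [if_pos le_rfl]
      rw [e1, e2, base, hA1, zero_mul, zero_add, div_mul_eq_mul_div, div_eq_iff h2d]
      ring
    · -- k ≥ d + 2
      have hk2 : d + 2 ≤ k := h
      have hm : k - 1 + 1 = k := by omega
      have hstep := apollonian_step d hd (k - 1) (by omega)
      rw [hm] at hstep
      have e1 : apollonianDegreeDistExt d k = apollonianDegreeDist d k := by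
        unfold apollonianDegreeDistExt; rw [if_neg (by omega)]
      have e2 : apollonianDegreeDistExt d (k - 1) = apollonianDegreeDist d (k - 1) := by
        unfold apollonianDegreeDistExt; rw [if_neg (by omega)]
      rw [e1, e2, if_neg (by omega), add_zero]
      exact hstep
  · -- uniqueness
    intro q hq0 hqrec
    refine Nat.le_induction ?_ ?_
    · -- base case k = d + 1
      have h := hqrec (d + 1) le_rfl
      rw [if_pos rfl, Nat.add_sub_cancel, hq0, zero_mul, zero_add, hA1] at h
      have e : (d:ℝ) + ((d:ℝ) + 1) = 2 * (d:ℝ) + 1 := by ring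
      rw [e] at h
      rw [base, eq_div_iff h2d]
      exact h
    · -- inductive step
      intro n hn ih
      have h := hqrec (n + 1) (by omega)
      rw [if_neg (by omega), Nat.add_sub_cancel, add_zero] at h
      have hstep := apollonian_step d hd n hn
      have hN : (d : ℝ) + 1 ≤ (n : ℝ) := by
        have := (Nat.cast_le (α := ℝ)).mpr hn
        push_cast at this
        linarith
      have hpos : (0:ℝ) < (d:ℝ) + activeCliques d (n + 1) := by
        unfold activeCliques
        push_cast
        nlinarith [mul_le_mul_of_nonneg_right (show (2:ℝ) ≤ (n:ℝ) + 1 - (d:ℝ) by linarith)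
          (show (0:ℝ) ≤ (d:ℝ) - 1 by linarith)]
      apply mul_right_cancel₀ hpos.ne'
      calc q (n + 1) * ((d:ℝ) + activeCliques d (n + 1))
          = q n * activeCliques d n := h
        _ = apollonianDegreeDist d n * activeCliques d n := by rw [ih]
        _ = apollonianDegreeDist d (n + 1) * ((d:ℝ) + activeCliques d (n + 1)) := hstep.symm
  · -- explicit ratio form
    intro k hk
    have hK : (d : ℝ) + 2 ≤ (k : ℝ) := by
      have := (Nat.cast_le (α := ℝ)).mpr hk
      push_cast at this
      linarith
    have hm : k - 1 + 1 = k := by omega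
    have hstep := apollonian_step d hd (k - 1) (by omega)
    rw [hm] at hstep
    have hDm : (0:ℝ) < (k:ℝ) * ((d:ℝ) - 1) - (d:ℝ) ^ 2 + 2 * (d:ℝ) + 2 := by
      nlinarith [mul_le_mul_of_nonneg_right (show (d:ℝ) + 2 ≤ (k:ℝ) from hK)
        (show (0:ℝ) ≤ (d:ℝ) - 1 by linarith)]
    have eA : (d:ℝ) + activeCliques d k
        = (k:ℝ) * ((d:ℝ) - 1) - (d:ℝ) ^ 2 + 2 * (d:ℝ) + 2 := by
      unfold activeCliques; ring
    have eA2 : activeCliques d (k - 1)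
        = ((k:ℝ) - 1) * ((d:ℝ) - 1) - (d:ℝ) ^ 2 + (d:ℝ) + 2 := by
      unfold activeCliques
      rw [Nat.cast_sub (by omega)]
      push_cast
      ring
    rw [eA, eA2] at hstep
    rw [eq_div_iff hDm.ne']
    exact hstep
end

section
/- Let d ≥ 2 and let (q_n)_{n≥1} be a sequence in [0,1]. Let (N_n)_{n≥0} be a Markov chain adapted to a filtration (F_n) with N_0 = 0 and such that, conditionally on F_n, the increment N_{n+1} − N_n has the Binomial(d·N_n + d + 1, q_{n+1}) distribution. Then M_n := (N_n + (d+1)/d) · Π_{i=1}^n (1 + d·q_i)^{−1} is a nonnegative martingale with respect to (F_n), and consequently N_n · Π_{i=1}^n (1 + d·q_i)^{−1} converges almost surely to a nonnegative random variable ξ. -/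
/-!
Conditionally on `F n`, the binomial increment has mean `(d N_n + d + 1) q_{n+1}`, so
`E[N_{n+1} + (d+1)/d | F n] = (1 + d q_{n+1}) (N_n + (d+1)/d)`: the shift `(d+1)/d` turns the
affine drift into a multiplicative one, and dividing by `∏ (1 + d q_i)` gives a martingale.
Increments are at most `d N_n + d + 1`, so every `N_n` is bounded and all conditional
expectations are finite sums (the binomial mean being the Bernstein identity
`∑ k • bernsteinPolynomial n k = n • X`). Being nonnegative, the martingale is bounded in `L¹` by
its constant mean and converges a.s. by Doob's theorem; the deterministic product decreases to a
limit, hence so does `N_n ∏ (1 + d q_i)⁻¹ = M_n - (d+1)/d ∏ (1 + d q_i)⁻¹`.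
-/

open MeasureTheory ProbabilityTheory Filter Finset Polynomial

lemma sum_range_bernsteinPolynomial_eval {n K : ℕ} (hnK : n < K) (p : ℝ) :
    ∑ k ∈ range K, (bernsteinPolynomial ℝ n k).eval p = 1 := by
  rw [← sum_subset (range_subset_range.2 hnK) fun k _ hk => by
    rw [bernsteinPolynomial.eq_zero_of_lt ℝ (by simpa using hk), eval_zero]]
  simpa [eval_finsetSum] using congr_arg (eval p) (bernsteinPolynomial.sum ℝ n)

lemma sum_range_mul_bernsteinPolynomial_eval {n K : ℕ} (hnK : n < K) (p : ℝ) :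
    ∑ k ∈ range K, k * (bernsteinPolynomial ℝ n k).eval p = n * p := by
  rw [← sum_subset (range_subset_range.2 hnK) fun k _ hk => by
    rw [bernsteinPolynomial.eq_zero_of_lt ℝ (by simpa using hk), eval_zero, mul_zero]]
  simpa [eval_finsetSum] using congr_arg (eval p) (bernsteinPolynomial.sum_smul ℝ n)

lemma bernsteinPolynomial_eval (n k : ℕ) (p : ℝ) :
    (bernsteinPolynomial ℝ n k).eval p = n.choose k * p ^ k * (1 - p) ^ (n - k) := by
  simp [bernsteinPolynomial]

section CondExpIncrement

variable {Ω : Type*} {m m0 : MeasurableSpace Ω} {P : Measure Ω} [IsProbabilityMeasure P]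
  {X Y : Ω → ℕ} {π : ℕ → Ω → ℝ} {K : ℕ}

lemma ae_exists_lt_eq_add_of_condExp_indicator (hm : m ≤ m0) (hX : Measurable X)
    (hY : Measurable Y)
    (hπ : ∀ k, P[{ω | Y ω = X ω + k}.indicator 1 | m] =ᵐ[P] π k)
    (hsum : ∀ᵐ ω ∂P, ∑ k ∈ range K, π k ω = 1) :
    ∀ᵐ ω ∂P, ∃ k < K, Y ω = X ω + k := by
  set A : ℕ → Set Ω := fun k => {ω | Y ω = X ω + k}
  have hA : ∀ k, MeasurableSet (A k) := fun k => measurableSet_eq_fun hY (hX.add_const k)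
  have hE : {ω | ∃ k < K, Y ω = X ω + k} = ⋃ k ∈ range K, A k := by
    ext ω; simp [A]
  have hπint : ∀ k, Integrable (π k) P := fun k => integrable_condExp.congr (hπ k)
  have hprob : ∀ k, P.real (A k) = ∫ ω, π k ω ∂P := fun k => by
    rw [← integral_congr_ae (hπ k), integral_condExp hm, integral_indicator_one (hA k)]
  have hmeasure : P.real {ω | ∃ k < K, Y ω = X ω + k} = 1 := by
    rw [hE, measureReal_biUnion_finset _ fun k _ => hA k]
    · simp_rw [hprob]
      rw [← integral_finsetSum _ fun k _ => hπint k, integral_congr_ae hsum]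
      simp
    · intro i _ j _ hij
      exact Set.disjoint_left.2 fun ω hi hj => hij (by simp_all [A])
  have hEmeas : MeasurableSet {ω | ∃ k < K, Y ω = X ω + k} := by
    rw [hE]; exact Finset.measurableSet_biUnion _ fun k _ => hA k
  rw [ae_iff_measure_eq hEmeas.nullMeasurableSet, measure_univ]
  exact (ENNReal.toReal_eq_one_iff _).mp hmeasure

lemma condExp_natCast_eq_add_sum_mul (hm : m ≤ m0) (hX : Measurable[m] X) (hY : Measurable Y)
    (hXint : Integrable (fun ω => (X ω : ℝ)) P)
    (hπ : ∀ k, P[{ω | Y ω = X ω + k}.indicator 1 | m] =ᵐ[P] π k)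
    (hsum : ∀ᵐ ω ∂P, ∑ k ∈ range K, π k ω = 1) :
    P[fun ω => (Y ω : ℝ) | m] =ᵐ[P] fun ω => X ω + ∑ k ∈ range K, k * π k ω := by
  set A : ℕ → Set Ω := fun k => {ω | Y ω = X ω + k}
  have hA : ∀ k, MeasurableSet (A k) := fun k =>
    measurableSet_eq_fun hY ((hX.mono hm le_rfl).add_const k)
  set f : ℕ → Ω → ℝ := fun k ω => X ω + k
  have hf : ∀ k, StronglyMeasurable[m] (f k) := fun k =>
    (measurable_from_top.comp hX).add_const _ |>.stronglyMeasurable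
  have hfA : ∀ k, Integrable (f k * (A k).indicator 1) P := fun k => by
    have : f k * (A k).indicator 1 = (A k).indicator (f k) := by
      ext ω; simp [Set.indicator_apply]
    rw [this]
    exact (hXint.add (integrable_const _)).indicator (hA k)
  have hdecomp : (fun ω => (Y ω : ℝ)) =ᵐ[P] ∑ k ∈ range K, f k * (A k).indicator 1 := by
    filter_upwards [ae_exists_lt_eq_add_of_condExp_indicator hm (hX.mono hm le_rfl) hY hπ hsum]
      with ω ⟨j, hj, hYj⟩
    rw [Finset.sum_apply, sum_eq_single_of_mem j (mem_range.2 hj)]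
    · simp [A, f, hYj]
    · intro k _ hkj
      simp [A, f, hYj, Ne.symm hkj]
  have hpull : ∀ᵐ ω ∂P, ∀ k, P[f k * (A k).indicator 1 | m] ω = f k ω * π k ω :=
    ae_all_iff.2 fun k => by
      filter_upwards [condExp_mul_of_stronglyMeasurable_left (hf k) (hfA k)
        ((integrable_const 1).indicator (hA k)), hπ k] with ω h1 h2
      rw [h1, Pi.mul_apply, h2]
  refine (condExp_congr_ae hdecomp).trans ((condExp_finsetSum (fun k _ => hfA k) m).trans ?_)
  filter_upwards [hpull, hsum] with ω hω hω1
  simp only [Finset.sum_apply, hω, f, add_mul, sum_add_distrib, ← mul_sum, hω1, mul_one]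

end CondExpIncrement

/-- Conditionally on `m`, `Y - X` is `Binomial(T, p)`; the increment is encoded as `Y = X + k`, so
this forces `X ≤ Y` almost surely. -/
def HasCondBinomialIncrement {Ω : Type*} {m0 : MeasurableSpace Ω} (P : Measure Ω)
    (m : MeasurableSpace Ω) (X Y T : Ω → ℕ) (p : ℝ) : Prop :=
  ∀ k : ℕ, P[{ω | Y ω = X ω + k}.indicator (1 : Ω → ℝ) | m] =ᵐ[P]
    fun ω => ((T ω).choose k : ℝ) * p ^ k * (1 - p) ^ (T ω - k)

namespace HasCondBinomialIncrement

variable {Ω : Type*} {m m0 : MeasurableSpace Ω} {P : Measure Ω} {X Y T : Ω → ℕ} {p : ℝ} {C : ℕ}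

lemma condExp_indicator_eq_bernsteinPolynomial (h : HasCondBinomialIncrement P m X Y T p)
    (k : ℕ) :
    P[{ω | Y ω = X ω + k}.indicator 1 | m] =ᵐ[P]
      fun ω => (bernsteinPolynomial ℝ (T ω) k).eval p := by
  simpa only [bernsteinPolynomial_eval] using h k

variable [IsProbabilityMeasure P]

lemma ae_le_add (h : HasCondBinomialIncrement P m X Y T p) (hm : m ≤ m0) (hX : Measurable X)
    (hY : Measurable Y) (hT : ∀ᵐ ω ∂P, T ω ≤ C) :
    ∀ᵐ ω ∂P, Y ω ≤ X ω + C := by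
  have hsum : ∀ᵐ ω ∂P, ∑ k ∈ range (C + 1), (bernsteinPolynomial ℝ (T ω) k).eval p = 1 :=
    hT.mono fun ω hω => sum_range_bernsteinPolynomial_eval (Nat.lt_succ_of_le hω) p
  filter_upwards [ae_exists_lt_eq_add_of_condExp_indicator hm hX hY
    h.condExp_indicator_eq_bernsteinPolynomial hsum] with ω ⟨k, hk, hYk⟩
  omega

lemma condExp_natCast_eq (h : HasCondBinomialIncrement P m X Y T p) (hm : m ≤ m0)
    (hX : Measurable[m] X) (hY : Measurable Y) (hXint : Integrable (fun ω => (X ω : ℝ)) P)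
    (hT : ∀ᵐ ω ∂P, T ω ≤ C) :
    P[fun ω => (Y ω : ℝ) | m] =ᵐ[P] fun ω => X ω + T ω * p := by
  have hsum : ∀ᵐ ω ∂P, ∑ k ∈ range (C + 1), (bernsteinPolynomial ℝ (T ω) k).eval p = 1 :=
    hT.mono fun ω hω => sum_range_bernsteinPolynomial_eval (Nat.lt_succ_of_le hω) p
  filter_upwards [condExp_natCast_eq_add_sum_mul hm hX hY hXint
    h.condExp_indicator_eq_bernsteinPolynomial hsum, hT] with ω hω hTω
  rw [hω, sum_range_mul_bernsteinPolynomial_eval (Nat.lt_succ_of_le hTω)]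

end HasCondBinomialIncrement

section Martingale

variable {Ω : Type*} {m0 : MeasurableSpace Ω} {P : Measure Ω} {F : Filtration ℕ m0}

lemma martingale_mul_prod_inv_of_condExp_succ [IsFiniteMeasure P] {f : ℕ → Ω → ℝ} {a : ℕ → ℝ}
    {c : ℝ} (hadp : StronglyAdapted F f) (hint : ∀ n, Integrable (f n) P)
    (ha : ∀ n, a (n + 1) ≠ 0)
    (hcond : ∀ n, P[f (n + 1) | F n] =ᵐ[P] fun ω => a (n + 1) * (f n ω + c) - c) :
    Martingale (fun n ω => (f n ω + c) * ∏ i ∈ Icc 1 n, (a i)⁻¹) F P := by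
  refine martingale_nat (fun n => ((hadp n).add_const c).mul_const _)
    (fun n => ((hint n).add (integrable_const c)).mul_const _) fun n => ?_
  set r := ∏ i ∈ Icc 1 (n + 1), (a i)⁻¹
  have hsplit : (fun ω => (f (n + 1) ω + c) * r) = r • f (n + 1) + fun _ => c * r := by
    ext ω; simp only [Pi.add_apply, Pi.smul_apply, smul_eq_mul]; ring
  rw [hsplit]
  filter_upwards [condExp_add ((hint (n + 1)).smul r) (integrable_const (c * r)) (F n),
    condExp_smul r (f (n + 1)) (F n), hcond n] with ω h_add h_smul h_cond
  have hr : r = (∏ i ∈ Icc 1 n, (a i)⁻¹) * (a (n + 1))⁻¹ :=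
    prod_Icc_succ_top (Nat.le_add_left 1 n) _
  rw [h_add, Pi.add_apply, h_smul, condExp_const (F.le n), Pi.smul_apply, h_cond, smul_eq_mul, hr]
  field_simp [ha n]
  ring

lemma MeasureTheory.Martingale.ae_tendsto_limitProcess_of_nonneg [IsFiniteMeasure P] {f : ℕ → Ω → ℝ}
    (hf : Martingale f F P) (hnn : ∀ n, 0 ≤ᵐ[P] f n) :
    ∀ᵐ ω ∂P, Tendsto (fun n => f n ω) atTop (nhds (F.limitProcess f P ω)) := by
  refine hf.submartingale.ae_tendsto_limitProcess (R := (∫ ω, f 0 ω ∂P).toNNReal) fun n => ?_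
  have hnorm : (fun ω => ‖f n ω‖) =ᵐ[P] f n := (hnn n).mono fun ω hω => Real.norm_of_nonneg hω
  rw [eLpNorm_one_eq_lintegral_enorm, ← ofReal_integral_norm_eq_lintegral_enorm (hf.integrable n),
    integral_congr_ae hnorm, ← setIntegral_univ, ← hf.setIntegral_eq (Nat.zero_le n) .univ,
    setIntegral_univ]
  rfl

end Martingale

lemma exists_tendsto_prod_Icc_inv {a : ℕ → ℝ} (ha : ∀ n, 1 ≤ a (n + 1)) :
    ∃ p, Tendsto (fun n => ∏ i ∈ Icc 1 n, (a i)⁻¹) atTop (nhds p) := by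
  have hfac : ∀ n, 0 ≤ (a (n + 1))⁻¹ ∧ (a (n + 1))⁻¹ ≤ 1 := fun n =>
    ⟨inv_nonneg.2 (zero_le_one.trans (ha n)), inv_le_one_of_one_le₀ (ha n)⟩
  have hnonneg : ∀ n, 0 ≤ ∏ i ∈ Icc 1 n, (a i)⁻¹ := fun n => prod_nonneg fun i hi => by
    obtain ⟨j, rfl⟩ := Nat.exists_eq_add_one_of_ne_zero (show i ≠ 0 by rw [mem_Icc] at hi; omega)
    exact (hfac j).1
  have hanti : Antitone fun n => ∏ i ∈ Icc 1 n, (a i)⁻¹ := antitone_nat_of_succ_le fun n => by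
    rw [prod_Icc_succ_top (Nat.le_add_left 1 n)]
    exact mul_le_of_le_one_right (hnonneg n) (hfac n).2
  exact ⟨_, tendsto_atTop_ciInf hanti ⟨0, Set.forall_mem_range.2 hnonneg⟩⟩

lemma exists_nonneg_ae_tendsto {Ω : Type*} {m0 : MeasurableSpace Ω} {P : Measure Ω}
    {u : ℕ → Ω → ℝ} (hu : ∀ n ω, 0 ≤ u n ω)
    (hlim : ∀ᵐ ω ∂P, ∃ l, Tendsto (fun n => u n ω) atTop (nhds l)) :
    ∃ ξ : Ω → ℝ, (∀ ω, 0 ≤ ξ ω) ∧ ∀ᵐ ω ∂P, Tendsto (fun n => u n ω) atTop (nhds (ξ ω)) := by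
  refine ⟨fun ω => max (limUnder atTop fun n => u n ω) 0, fun ω => le_max_right _ _, ?_⟩
  filter_upwards [hlim] with ω ⟨l, hl⟩
  rwa [hl.limUnder_eq, max_eq_left (ge_of_tendsto' hl fun n => hu n ω)]

section ApollonianChain

variable {Ω : Type*} {m0 : MeasurableSpace Ω} {P : Measure Ω} [IsProbabilityMeasure P]
  {F : Filtration ℕ m0} {N : ℕ → Ω → ℕ} {d : ℕ} {q : ℕ → ℝ}

lemma exists_ae_le_of_hasCondBinomialIncrement (hadapted : ∀ n, Measurable[F n] (N n))
    (hzero : ∀ ω, N 0 ω = 0)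
    (hbinom : ∀ n, HasCondBinomialIncrement P (F n) (N n) (N (n + 1))
      (fun ω => d * N n ω + d + 1) (q (n + 1))) (n : ℕ) :
    ∃ B : ℕ, ∀ᵐ ω ∂P, N n ω ≤ B := by
  induction n with
  | zero => exact ⟨0, ae_of_all _ fun ω => (hzero ω).le⟩
  | succ n ih =>
    obtain ⟨B, hB⟩ := ih
    refine ⟨B + (d * B + d + 1), ?_⟩
    filter_upwards [hB, (hbinom n).ae_le_add (F.le n) ((hadapted n).mono (F.le n) le_rfl)
      ((hadapted (n + 1)).mono (F.le _) le_rfl) (C := d * B + d + 1) (hB.mono fun ω hω => by gcongr)] with ω h1 h2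
    omega

lemma integrable_of_hasCondBinomialIncrement (hadapted : ∀ n, Measurable[F n] (N n))
    (hzero : ∀ ω, N 0 ω = 0)
    (hbinom : ∀ n, HasCondBinomialIncrement P (F n) (N n) (N (n + 1))
      (fun ω => d * N n ω + d + 1) (q (n + 1))) (n : ℕ) :
    Integrable (fun ω => (N n ω : ℝ)) P := by
  obtain ⟨B, hB⟩ := exists_ae_le_of_hasCondBinomialIncrement hadapted hzero hbinom n
  refine .of_bound (measurable_from_top.comp ((hadapted n).mono (F.le n) le_rfl)).aestronglyMeasurable
    B (hB.mono fun ω hω => ?_)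
  simpa using hω

lemma condExp_succ_of_hasCondBinomialIncrement (hd : d ≠ 0) (hadapted : ∀ n, Measurable[F n] (N n))
    (hzero : ∀ ω, N 0 ω = 0)
    (hbinom : ∀ n, HasCondBinomialIncrement P (F n) (N n) (N (n + 1))
      (fun ω => d * N n ω + d + 1) (q (n + 1))) (n : ℕ) :
    P[fun ω => (N (n + 1) ω : ℝ) | F n] =ᵐ[P]
      fun ω => (1 + d * q (n + 1)) * (N n ω + (d + 1) / d) - (d + 1) / d := by
  obtain ⟨B, hB⟩ := exists_ae_le_of_hasCondBinomialIncrement hadapted hzero hbinom n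
  filter_upwards [(hbinom n).condExp_natCast_eq (F.le n) (hadapted n)
    ((hadapted (n + 1)).mono (F.le _) le_rfl)
    (integrable_of_hasCondBinomialIncrement hadapted hzero hbinom n)
    (C := d * B + d + 1) (hB.mono fun ω hω => by gcongr)] with ω hω
  rw [hω]
  push_cast
  field_simp
  ring

end ApollonianChain

/-- Let `d ≥ 2` and `(q_n)_{n≥1} ⊆ [0,1]`.  Let `(N_n)_{n≥0}` be adapted to a
filtration `(F_n)` with `N_0 = 0`, such that conditionally on `F_n` the increment
`N_{n+1} − N_n` is `Binomial(d·N_n + d + 1, q_{n+1})`-distributed.  Then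
`M_n = (N_n + (d+1)/d) · Π_{i=1}^n (1 + d·q_i)⁻¹` is a nonnegative martingale, and
consequently `N_n · Π_{i=1}^n (1 + d·q_i)⁻¹` converges almost surely to a nonnegative
random variable `ξ`. -/
theorem ean_node_count_martingale (d : ℕ) (hd : 2 ≤ d)
    (q : ℕ → ℝ) (hq : ∀ i, q i ∈ Set.Icc (0 : ℝ) 1)
    {Ω : Type*} {m0 : MeasurableSpace Ω} (P : Measure Ω) [IsProbabilityMeasure P]
    (F : Filtration ℕ m0)
    (N : ℕ → Ω → ℕ)
    (hadapted : ∀ n, Measurable[F n] (N n))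
    (hzero : ∀ ω, N 0 ω = 0)
    (hbinom : ∀ n k : ℕ,
      (P[Set.indicator {ω' | N (n + 1) ω' = N n ω' + k} (1 : Ω → ℝ) | F n]) =ᵐ[P]
        fun ω => (((d * N n ω + d + 1).choose k : ℕ) : ℝ) *
          q (n + 1) ^ k * (1 - q (n + 1)) ^ (d * N n ω + d + 1 - k)) :
    (∀ n ω, 0 ≤ ((N n ω : ℝ) + ((d : ℝ) + 1) / d) *
        ∏ i ∈ Finset.Icc 1 n, (1 + (d : ℝ) * q i)⁻¹) ∧
    Martingale (fun n ω => ((N n ω : ℝ) + ((d : ℝ) + 1) / d) *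
        ∏ i ∈ Finset.Icc 1 n, (1 + (d : ℝ) * q i)⁻¹) F P ∧
    ∃ ξ : Ω → ℝ, (∀ ω, 0 ≤ ξ ω) ∧
      ∀ᵐ ω ∂P, Tendsto (fun n : ℕ =>
          (N n ω : ℝ) * ∏ i ∈ Finset.Icc 1 n, (1 + (d : ℝ) * q i)⁻¹)
        atTop (nhds (ξ ω)) := by
  have hbinom' : ∀ n, HasCondBinomialIncrement P (F n) (N n) (N (n + 1))
      (fun ω => d * N n ω + d + 1) (q (n + 1)) := hbinom
  have hfac : ∀ i, 1 ≤ 1 + (d : ℝ) * q i := fun i =>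
    le_add_of_nonneg_right (mul_nonneg d.cast_nonneg (hq i).1)
  have hprod : ∀ n, 0 ≤ ∏ i ∈ Finset.Icc 1 n, (1 + (d : ℝ) * q i)⁻¹ := fun n =>
    prod_nonneg fun i _ => inv_nonneg.2 (zero_le_one.trans (hfac i))
  have hM := martingale_mul_prod_inv_of_condExp_succ (f := fun n ω => (N n ω : ℝ))
    (a := fun i => 1 + (d : ℝ) * q i) (c := ((d : ℝ) + 1) / d)
    (fun n => (measurable_from_top.comp (hadapted n)).stronglyMeasurable)
    (integrable_of_hasCondBinomialIncrement hadapted hzero hbinom')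
    (fun n => (zero_lt_one.trans_le (hfac (n + 1))).ne')
    (condExp_succ_of_hasCondBinomialIncrement (by omega) hadapted hzero hbinom')
  have hMnn : ∀ n ω, 0 ≤ ((N n ω : ℝ) + ((d : ℝ) + 1) / d) *
      ∏ i ∈ Finset.Icc 1 n, (1 + (d : ℝ) * q i)⁻¹ := fun n ω =>
    mul_nonneg (by positivity) (hprod n)
  obtain ⟨p, hp⟩ := exists_tendsto_prod_Icc_inv (a := fun i => 1 + (d : ℝ) * q i)
    fun n => hfac (n + 1)
  refine ⟨hMnn, hM, exists_nonneg_ae_tendsto (fun n ω => mul_nonneg (by positivity) (hprod n)) ?_⟩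
  filter_upwards [hM.ae_tendsto_limitProcess_of_nonneg fun n => ae_of_all _ (hMnn n)] with ω hω
  refine ⟨_, (hω.sub (hp.const_mul (((d : ℝ) + 1) / d))).congr fun n => ?_⟩
  ring
end
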